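/- arXiv:1707.02437 — 6 statements merged into one kernel-verified Lean document; each statement's English description precedes it below -/
import Mathlib

section
/- Let f : ℝ^n → ℝ^n be a smooth (continuously differentiable) vector field that is quasimonotone increasing, i.e., for each i and all x, and all a_1,...,a_n ≥ 0, f_i(x_1+a_1,...,x_{i-1}+a_{i-1}, x_i, x_{i+1}+a_{i+1},...,x_n+a_n) ≥ f_i(x). If x(t) solves x' = f(x), y(t) satisfies y'(t) ≤ f(y(t)) componentwise, and x(0) = y(0), then y(t) ≤ x(t) componentwise for all t ≥ 0. -/
/-!
Fix `T ≥ 0`. On `[0, T]` the solution `x` stays in a ball of radius `R`, and the `C¹` field `f`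
is `L`-Lipschitz on the ball of radius `R + 1`. Suppose some component of `y - x` first touches
the fence `δ e^{(L+1)(t-T)}` (with `0 < δ ≤ 1`) in component `i`. Quasimonotonicity lets us
raise the other components of `y` up to `x + fence` without decreasing `fᵢ`; as `δ ≤ 1` keeps
`x + fence` in the larger ball, `(yᵢ - xᵢ)' ≤ fᵢ(x + fence) - fᵢ(x) ≤ L · fence`, which is slower
than the fence grows. Hence `y - x` stays below the fence on `[0, T]`, and `δ → 0` gives `y T ≤ x T`.
-/

open Set Filter Topology Metric Real
open scoped NNReal

theorem HasDerivWithinAt.eventually_nhdsGT_lt_of_pos {f : ℝ → ℝ} {f' x : ℝ}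
    (hf : HasDerivWithinAt f f' (Ici x) x) (hf' : 0 < f') : ∀ᶠ z in 𝓝[>] x, f x < f z := by
  have hslope := (hasDerivWithinAt_iff_tendsto_slope' (lt_irrefl x)).1 hf.Ioi_of_Ici
  filter_upwards [hslope.eventually (lt_mem_nhds hf'), self_mem_nhdsWithin] with z hz hxz
  exact (slope_pos_iff hxz).1 hz

theorem image_le_of_deriv_right_lt_deriv_boundary_pi {ι : Type*} [Finite ι]
    {g g' : ι → ℝ → ℝ} {B B' : ℝ → ℝ} {a b : ℝ}
    (hg : ∀ i, ContinuousOn (g i) (Icc a b))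
    (hg' : ∀ i, ∀ t ∈ Ico a b, HasDerivWithinAt (g i) (g' i t) (Ici t) t)
    (ha : ∀ i, g i a ≤ B a) (hB : ContinuousOn B (Icc a b))
    (hB' : ∀ t ∈ Ico a b, HasDerivWithinAt B (B' t) (Ici t) t)
    (bound : ∀ t ∈ Ico a b, (∀ j, g j t ≤ B t) → ∀ i, g i t = B t → g' i t < B' t) :
    ∀ ⦃t⦄, t ∈ Icc a b → ∀ i, g i t ≤ B t := by
  change Icc a b ⊆ {t | ∀ i, g i t ≤ B t}
  refine IsClosed.Icc_subset_of_forall_mem_nhdsWithin ?_ ha ?_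
  · have hcont : ContinuousOn (fun t => ((fun i => g i t), fun _ : ι => B t)) (Icc a b) :=
      (continuousOn_pi.2 hg).prodMk (continuousOn_pi.2 fun _ => hB)
    rw [inter_comm]
    exact hcont.preimage_isClosed_of_isClosed isClosed_Icc OrderClosedTopology.isClosed_le'
  rintro t ⟨hle, hab⟩
  refine eventually_all.2 fun i => ?_
  rcases (hle i).lt_or_eq with hlt | heq
  · have hBc := (hB' t hab).continuousWithinAt.mono_left (nhdsWithin_mono t Ioi_subset_Ici_self)
    have hgc := (hg' i t hab).continuousWithinAt.mono_left (nhdsWithin_mono t Ioi_subset_Ici_self)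
    exact (hgc.eventually_lt hBc hlt).mono fun _ => le_of_lt
  · have hgap := ((hB' t hab).sub (hg' i t hab)).eventually_nhdsGT_lt_of_pos
      (sub_pos.2 (bound t hab hle i heq))
    filter_upwards [hgap] with z hz
    rw [Pi.sub_apply, Pi.sub_apply, heq, sub_self, sub_pos] at hz
    exact hz.le

def IsQuasimonotone {ι : Type*} [DecidableEq ι] (f : (ι → ℝ) → ι → ℝ) : Prop :=
  ∀ (i : ι) (u a : ι → ℝ), (∀ j, 0 ≤ a j) → f u i ≤ f (fun j => if j = i then u j else u j + a j) i

namespace IsQuasimonotone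

variable {ι : Type*} [DecidableEq ι] {f : (ι → ℝ) → ι → ℝ}

theorem apply_le_apply (hf : IsQuasimonotone f) {u v : ι → ℝ} {i : ι} (huv : u ≤ v)
    (hi : u i = v i) : f u i ≤ f v i := by
  convert hf i u (v - u) fun j => sub_nonneg.2 (huv j) using 3 with j
  split_ifs with hj
  · rw [hj, hi]
  · simp

theorem apply_sub_apply_le_of_lipschitzOnWith [Fintype ι] (hf : IsQuasimonotone f)
    {s : Set (ι → ℝ)} {L : ℝ≥0} (hL : LipschitzOnWith L f s) {u v : ι → ℝ} {c : ℝ} {i : ι}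
    (hc : 0 ≤ c) (hu : u ∈ s) (huc : (u + fun _ => c) ∈ s) (hvu : ∀ j, v j ≤ u j + c)
    (hi : v i = u i + c) : f v i - f u i ≤ L * c :=
  calc f v i - f u i ≤ f (u + fun _ => c) i - f u i :=
        sub_le_sub_right (hf.apply_le_apply hvu hi) _
    _ ≤ ‖f (u + fun _ => c) - f u‖ :=
        (le_abs_self _).trans (norm_le_pi_norm (f (u + fun _ => c) - f u) i)
    _ ≤ L * ‖(u + fun _ => c) - u‖ := hL.norm_sub_le huc hu
    _ ≤ L * c := by
      gcongr
      simpa [abs_of_nonneg hc] using pi_norm_const_le (ι := ι) c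

theorem sub_le_mul_exp [Fintype ι] (hf : IsQuasimonotone f) {R T δ : ℝ} {L : ℝ≥0}
    (hL : LipschitzOnWith L f (closedBall 0 (R + 1))) {x y y' : ℝ → ι → ℝ}
    (hx : ∀ t, 0 ≤ t → HasDerivAt x (f (x t)) t) (hy : ∀ t, 0 ≤ t → HasDerivAt y (y' t) t)
    (hy' : ∀ t, 0 ≤ t → ∀ i, y' t i ≤ f (y t) i) (h0 : y 0 = x 0)
    (hxR : ∀ t ∈ Icc 0 T, ‖x t‖ ≤ R) (hδ : δ ∈ Ioc 0 1) :
    ∀ t ∈ Icc 0 T, ∀ i, y t i - x t i ≤ δ * exp ((L + 1) * (t - T)) := by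
  set B : ℝ → ℝ := fun t => δ * exp ((L + 1) * (t - T))
  have hB : ∀ t, HasDerivAt B (B t * (L + 1)) t := fun t => by
    simpa [B, mul_assoc] using
      ((((hasDerivAt_id t).sub_const T).const_mul (L + 1 : ℝ)).exp).const_mul δ
  have hg : ∀ t, 0 ≤ t → ∀ j,
      HasDerivAt (fun s => y s j - x s j) (y' t j - f (x t) j) t := fun t ht j =>
    (hasDerivAt_pi.1 (hy t ht) j).sub (hasDerivAt_pi.1 (hx t ht) j)
  refine image_le_of_deriv_right_lt_deriv_boundary_pi
    (fun j t ht => (hg t ht.1 j).continuousAt.continuousWithinAt)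
    (fun j t ht => (hg t ht.1 j).hasDerivWithinAt) (fun j => ?_)
    (fun t _ => (hB t).continuousAt.continuousWithinAt) (fun t _ => (hB t).hasDerivWithinAt) ?_
  · simp only [h0, sub_self]
    exact (mul_pos hδ.1 (exp_pos _)).le
  intro t ht hle i hi
  have hBpos : 0 < B t := mul_pos hδ.1 (exp_pos _)
  have hB1 : B t ≤ 1 := by
    refine mul_le_one₀ hδ.2 (exp_pos _).le (exp_le_one_iff.2 ?_)
    exact mul_nonpos_of_nonneg_of_nonpos (by positivity) (by linarith [ht.2])
  have hxt := hxR t (Ico_subset_Icc_self ht)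
  have hxball : x t ∈ closedBall 0 (R + 1) := mem_closedBall_zero_iff.2 (by linarith)
  have hwball : (x t + fun _ => B t) ∈ closedBall 0 (R + 1) := by
    refine mem_closedBall_zero_iff.2 ((norm_add_le _ _).trans ?_)
    have := pi_norm_const_le (ι := ι) (B t)
    rw [norm_of_nonneg hBpos.le] at this
    linarith
  calc y' t i - f (x t) i ≤ f (y t) i - f (x t) i := by linarith [hy' t ht.1 i]
    _ ≤ L * B t := hf.apply_sub_apply_le_of_lipschitzOnWith hL hBpos.le hxball hwball
        (fun j => by linarith [hle j]) (by linarith)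
    _ < B t * (L + 1) := by linarith

end IsQuasimonotone

/-- Chaplygin comparison lemma (lower/subsolution half): for a smooth quasimonotone
increasing vector field `f`, a subsolution `y` starting at the same point as a solution
`x` stays componentwise below `x` for all `t ≥ 0`. -/
theorem chaplygin_subsolution {n : ℕ} (f : (Fin n → ℝ) → (Fin n → ℝ))
    (hf : ContDiff ℝ 1 f)
    (hquasi : ∀ (i : Fin n) (u : Fin n → ℝ) (a : Fin n → ℝ), (∀ j, 0 ≤ a j) →
      f u i ≤ f (fun j => if j = i then u j else u j + a j) i)
    (x y : ℝ → Fin n → ℝ) (y' : ℝ → Fin n → ℝ)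
    (hx : ∀ t, 0 ≤ t → HasDerivAt x (f (x t)) t)
    (hy : ∀ t, 0 ≤ t → HasDerivAt y (y' t) t)
    (hy' : ∀ t, 0 ≤ t → ∀ i, y' t i ≤ f (y t) i)
    (h0 : y 0 = x 0) :
    ∀ t, 0 ≤ t → ∀ i, y t i ≤ x t i := by
  intro T hT i
  obtain ⟨R, hR⟩ := isCompact_Icc.exists_bound_of_continuousOn (s := Icc 0 T)
    fun t ht => (hx t ht.1).continuousAt.continuousWithinAt
  obtain ⟨L, hL⟩ := hf.locallyLipschitz.locallyLipschitzOn.exists_lipschitzOnWith_of_compact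
    (isCompact_closedBall (0 : Fin n → ℝ) (R + 1))
  refine sub_nonpos.1 (le_of_forall_pos_le_add fun ε hε => ?_)
  have hfence := IsQuasimonotone.sub_le_mul_exp (f := f) hquasi hL hx hy hy' h0 hR
    (δ := min ε 1) ⟨lt_min hε one_pos, min_le_right _ _⟩ T ⟨hT, le_rfl⟩ i
  rw [sub_self, mul_zero, exp_zero, mul_one] at hfence
  linarith [min_le_left ε 1]
end

section
/- Let f : ℝ^n → ℝ^n be a smooth quasimonotone increasing vector field. If x(t) solves x' = f(x), z(t) satisfies z'(t) ≥ f(z(t)) componentwise, and z(0) = x(0), then z(t) ≥ x(t) componentwise for all t ≥ 0. -/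
/-!
Let `L` be a Lipschitz constant of `f` on the closed `1`-neighbourhood of `z([0, T])`. For
`0 < δ ≤ 1`, `w = z + δ e^{(L+1)(t-T)}` is a strict supersolution: adding the constant
`E = δ e^{(L+1)(t-T)}` to the argument changes `f` by at most `L E`, and `w'` exceeds `z'` by
`(L+1) E`. A strict supersolution lying strictly above `x` at the initial time stays strictly
above: at the first time `t₀` some coordinate `i` of `w - x` vanishes, `x t₀ ≤ w t₀` with
equality in coordinate `i`, so quasimonotonicity gives `x'_i = f_i(x) ≤ f_i(w) < w'_i`, while
`w_i - x_i` decreasing to `0` from the left forces `w'_i - x'_i ≤ 0`. Letting `δ → 0` gives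
`x ≤ z`.
-/

open Set Metric Filter Topology

def QuasimonotoneIncreasing {ι α β : Type*} [Preorder α] [Preorder β]
    (f : (ι → α) → ι → β) : Prop :=
  ∀ ⦃u v : ι → α⦄ ⦃i : ι⦄, u ≤ v → u i = v i → f u i ≤ f v i

lemma quasimonotoneIncreasing_of_le_add {ι : Type*} [DecidableEq ι] {f : (ι → ℝ) → ι → ℝ}
    (hf : ∀ (i : ι) (u a : ι → ℝ), (∀ j, 0 ≤ a j) →
      f u i ≤ f (fun j => if j = i then u j else u j + a j) i) :
    QuasimonotoneIncreasing f := by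
  intro u v i huv hi
  have hv : (fun j => if j = i then u j else u j + (v - u) j) = v := by
    funext j
    by_cases hj : j = i
    · simp [hj, hi]
    · simp [hj]
  simpa only [hv] using hf i u (v - u) fun j => sub_nonneg.2 (huv j)

lemma HasDerivWithinAt.nonpos_of_isLocalMinOn_Iic {g : ℝ → ℝ} {d t : ℝ}
    (hg : HasDerivWithinAt g d (Iic t) t) (hmin : IsLocalMinOn g (Iic t) t) : d ≤ 0 := by
  have hcone : (-1 : ℝ) ∈ posTangentConeAt (Iic t) t :=
    mem_posTangentConeAt_of_segment_subset <|
      (convex_Iic t).segment_subset (mem_Iic.2 le_rfl) (by simp)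
  simpa using hmin.hasFDerivWithinAt_nonneg hg.hasFDerivWithinAt hcone

lemma exists_first_coord_zero {ι : Type*} [Finite ι] {g : ℝ → ι → ℝ} {a b : ℝ}
    (hg : ContinuousOn g (Icc a b)) (ha : ∀ i, 0 < g a i)
    (hb : ∃ t ∈ Icc a b, ∃ i, g t i ≤ 0) :
    ∃ t ∈ Ioc a b, ∃ i, g t i = 0 ∧ ∀ s ∈ Icc a t, 0 ≤ g s := by
  set S := Icc a b ∩ ⋃ i, (fun t => g t i) ⁻¹' Iic 0
  have hS : IsClosed S := by
    simp only [S, inter_iUnion]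
    exact isClosed_iUnion_of_finite fun i =>
      ((continuous_apply i).comp_continuousOn hg).preimage_isClosed_of_isClosed isClosed_Icc
        isClosed_Iic
  obtain ⟨t, ⟨htab, htS⟩, hleast⟩ :=
    (isCompact_Icc.of_isClosed_subset hS inter_subset_left).exists_isLeast
      (by simpa [S, Set.Nonempty] using hb)
  obtain ⟨i, hi⟩ := mem_iUnion.1 htS
  have hat : a < t := htab.1.lt_of_ne fun h => by subst h; exact (ha i).not_ge hi
  have hbefore : ∀ s ∈ Ico a t, 0 ≤ g s := fun s hs j =>
    le_of_not_ge fun hsj =>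
      hs.2.not_ge (hleast ⟨⟨hs.1, hs.2.le.trans htab.2⟩, mem_iUnion.2 ⟨j, hsj⟩⟩)
  have ht : 0 ≤ g t := by
    have hcont : ContinuousWithinAt g (Ico a t) t :=
      (hg t htab).mono (Ico_subset_Icc_self.trans (Icc_subset_Icc_right htab.2))
    have := right_nhdsWithin_Ico_neBot hat
    exact ge_of_tendsto hcont (eventually_nhdsWithin_of_forall hbefore)
  refine ⟨t, ⟨hat, htab.2⟩, i, le_antisymm hi (ht i), fun s hs => ?_⟩
  rcases hs.2.lt_or_eq with hst | rfl
  exacts [hbefore s ⟨hs.1, hst⟩, ht]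

theorem QuasimonotoneIncreasing.lt_of_strictSupersolution {ι : Type*} [Finite ι]
    {f : (ι → ℝ) → ι → ℝ} (hf : QuasimonotoneIncreasing f) {x w w' : ℝ → ι → ℝ} {a b : ℝ}
    (hxc : ContinuousOn x (Icc a b)) (hx : ∀ t ∈ Ioc a b, HasDerivWithinAt x (f (x t)) (Iic t) t)
    (hwc : ContinuousOn w (Icc a b)) (hw : ∀ t ∈ Ioc a b, HasDerivWithinAt w (w' t) (Iic t) t)
    (hw' : ∀ t ∈ Ioc a b, ∀ i, f (w t) i < w' t i) (ha : ∀ i, x a i < w a i) :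
    ∀ t ∈ Icc a b, ∀ i, x t i < w t i := by
  intro t ht i
  by_contra! hti
  obtain ⟨t₀, ht₀, j, hj, hle⟩ := exists_first_coord_zero (hwc.sub hxc)
    (fun i => sub_pos.2 (ha i)) ⟨t, ht, i, sub_nonpos.2 hti⟩
  have hderiv : HasDerivWithinAt (fun s => w s j - x s j) (w' t₀ j - f (x t₀) j) (Iic t₀) t₀ :=
    (hasDerivWithinAt_pi.1 (hw t₀ ht₀) j).sub (hasDerivWithinAt_pi.1 (hx t₀ ht₀) j)
  have hmin : IsLocalMinOn (fun s => w s j - x s j) (Iic t₀) t₀ :=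
    mem_of_superset (Icc_mem_nhdsLE ht₀.1) fun s hs => by
      have h := hle s hs j
      simp only [Pi.sub_apply, Pi.zero_apply] at h hj
      show w t₀ j - x t₀ j ≤ w s j - x s j
      linarith
  have hxw : x t₀ ≤ w t₀ := sub_nonneg.1 (hle t₀ ⟨ht₀.1.le, le_rfl⟩)
  have hfj : f (x t₀) j ≤ f (w t₀) j := hf hxw (sub_eq_zero.1 hj).symm
  linarith [hderiv.nonpos_of_isLocalMinOn_Iic hmin, hw' t₀ ht₀ j]

lemma LipschitzOnWith.apply_le_apply_add {α ι : Type*} [PseudoMetricSpace α] [Fintype ι]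
    {f : α → ι → ℝ} {L : NNReal} {s : Set α} (hf : LipschitzOnWith L f s) {u v : α}
    (hu : u ∈ s) (hv : v ∈ s) (i : ι) : f v i ≤ f u i + L * dist v u := by
  have h := (dist_le_pi_dist (f v) (f u) i).trans (hf.dist_le_mul v hv u hu)
  rw [Real.dist_eq] at h
  linarith [le_abs_self (f v i - f u i)]

lemma dist_add_const_le {ι : Type*} [Fintype ι] (u : ι → ℝ) {c : ℝ} (hc : 0 ≤ c) :
    dist (u + fun _ => c) u ≤ c := by
  simpa [dist_add_self_left, Real.norm_of_nonneg hc] using pi_norm_const_le (ι := ι) c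

theorem QuasimonotoneIncreasing.lt_supersolution_add {ι : Type*} [Fintype ι]
    {f : (ι → ℝ) → ι → ℝ} (hf : QuasimonotoneIncreasing f) {x z z' : ℝ → ι → ℝ} {a b δ : ℝ}
    {L : NNReal} (hL : LipschitzOnWith L f (cthickening 1 (z '' Icc a b)))
    (hxc : ContinuousOn x (Icc a b)) (hx : ∀ t ∈ Ioc a b, HasDerivWithinAt x (f (x t)) (Iic t) t)
    (hzc : ContinuousOn z (Icc a b)) (hz : ∀ t ∈ Ioc a b, HasDerivWithinAt z (z' t) (Iic t) t)
    (hz' : ∀ t ∈ Ioc a b, ∀ i, f (z t) i ≤ z' t i) (ha : ∀ i, x a i ≤ z a i)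
    (hδ : 0 < δ) (hδ1 : δ ≤ 1) :
    ∀ t ∈ Icc a b, ∀ i, x t i < z t i + δ * Real.exp ((L + 1) * (t - b)) := by
  set E : ℝ → ℝ := fun t => δ * Real.exp ((L + 1) * (t - b))
  have hE : ∀ t, HasDerivAt E ((L + 1) * E t) t := fun t =>
    (((((hasDerivAt_id t).sub_const b).const_mul (L + 1 : ℝ)).exp).const_mul δ).congr_deriv
      (by simp only [E, id]; ring)
  have hE_pos : ∀ t, 0 < E t := fun t => by positivity
  have hE_le : ∀ t ∈ Icc a b, E t ≤ 1 := fun t ht =>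
    (mul_le_of_le_one_right hδ.le (Real.exp_le_one_iff.2
      (mul_nonpos_of_nonneg_of_nonpos (by positivity) (sub_nonpos.2 ht.2)))).trans hδ1
  have hw' : ∀ t ∈ Ioc a b, ∀ i,
      f (z t + fun _ : ι => E t) i < (z' t + fun _ : ι => (L + 1) * E t) i := by
    intro t ht i
    have ht' : t ∈ Icc a b := Ioc_subset_Icc_self ht
    have hzt : z t ∈ cthickening 1 (z '' Icc a b) :=
      self_subset_cthickening _ (mem_image_of_mem z ht')
    have hdist := dist_add_const_le (z t) (hE_pos t).le
    have hwt : (z t + fun _ : ι => E t) ∈ cthickening 1 (z '' Icc a b) :=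
      mem_cthickening_of_dist_le _ (z t) _ _ (mem_image_of_mem z ht') (hdist.trans (hE_le t ht'))
    have hlip := hL.apply_le_apply_add hzt hwt i
    simp only [Pi.add_apply]
    linarith [hz' t ht i, hE_pos t, mul_le_mul_of_nonneg_left hdist L.coe_nonneg]
  intro t ht i
  refine hf.lt_of_strictSupersolution hxc hx
    (hzc.add (Continuous.continuousOn (by fun_prop)))
    (fun t ht => (hz t ht).add (hasDerivWithinAt_pi.2 fun _ => (hE t).hasDerivWithinAt)) hw'
    (fun i => ?_) t ht i
  simpa using (ha i).trans_lt (lt_add_of_pos_right _ (hE_pos a))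

/-- Chaplygin comparison lemma (upper/supersolution half): for a smooth quasimonotone
increasing vector field `f`, a supersolution `z` starting at the same point as a solution
`x` stays componentwise above `x` for all `t ≥ 0`. -/
theorem chaplygin_supersolution {n : ℕ} (f : (Fin n → ℝ) → (Fin n → ℝ))
    (hf : ContDiff ℝ 1 f)
    (hquasi : ∀ (i : Fin n) (u : Fin n → ℝ) (a : Fin n → ℝ), (∀ j, 0 ≤ a j) →
      f u i ≤ f (fun j => if j = i then u j else u j + a j) i)
    (x z : ℝ → Fin n → ℝ) (z' : ℝ → Fin n → ℝ)
    (hx : ∀ t, 0 ≤ t → HasDerivAt x (f (x t)) t)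
    (hz : ∀ t, 0 ≤ t → HasDerivAt z (z' t) t)
    (hz' : ∀ t, 0 ≤ t → ∀ i, f (z t) i ≤ z' t i)
    (h0 : z 0 = x 0) :
    ∀ t, 0 ≤ t → ∀ i, x t i ≤ z t i := by
  intro T hT i
  have hxc : ContinuousOn x (Icc 0 T) := fun t ht => (hx t ht.1).continuousAt.continuousWithinAt
  have hzc : ContinuousOn z (Icc 0 T) := fun t ht => (hz t ht.1).continuousAt.continuousWithinAt
  obtain ⟨L, hL⟩ := hf.locallyLipschitz.locallyLipschitzOn.exists_lipschitzOnWith_of_compact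
    ((isCompact_Icc.image_of_continuousOn hzc).cthickening (r := 1))
  refine le_of_forall_pos_lt_add fun ε hε => ?_
  have hlt := (quasimonotoneIncreasing_of_le_add hquasi).lt_supersolution_add hL hxc
    (fun t ht => (hx t ht.1.le).hasDerivWithinAt) hzc (fun t ht => (hz t ht.1.le).hasDerivWithinAt)
    (fun t ht => hz' t ht.1.le) (fun i => (congrFun h0 i).ge) (lt_min hε one_pos)
    (min_le_right ε 1) T ⟨hT, le_rfl⟩ i
  rw [sub_self, mul_zero, Real.exp_zero, mul_one] at hlt
  exact hlt.trans_le (add_le_add_right (min_le_left ε 1) _)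
end

section
/- The hypercube [0,1]^N is positively invariant for the SCS model: if C(0) ∈ [0,1]^N, then the solution C(t) of the SCS system satisfies C(t) ∈ [0,1]^N for all t in its interval of existence with t ≥ 0. -/
/-!
Let `e(y) = (y - 1)⁺ - (-y)⁺` be the signed distance from `y` to `[0, 1]`; `e²` is `C¹` with
derivative `2e`, so `V(t) = ∑ᵢ e(Cᵢ(t))²` is differentiable and vanishes at `t = 0`. Outside
`[0, 1]` every term of the vector field except the coupling `β ∑ⱼ aⱼᵢ Cⱼ` points back towards
`[0, 1]`, and since `aⱼᵢ ∈ [0, 1]` the coupling is bounded below by `-β ∑ⱼ |e(Cⱼ)|`. On a compact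
time interval, where `C` is bounded, this gives `V' ≤ K V`, and Grönwall's inequality forces
`V = 0`.
-/

open Set Filter

/-- The right-hand side of the SCS model. -/
noncomputable def scsF {N : ℕ} (a : Fin N → Fin N → ℝ) (w x : Fin N → ℝ) (α β δ γ : ℝ)
    (C : Fin N → ℝ) : Fin N → ℝ :=
  fun i => (1 / (δ * w i)) * (α * x i + β * ∑ j, a j i * C j) * (1 - C i) - γ * w i * C i

theorem nonpos_of_deriv_right_le_mul_self {f f' : ℝ → ℝ} {K a b : ℝ}
    (hf : ContinuousOn f (Icc a b)) (hf' : ∀ x ∈ Ico a b, HasDerivWithinAt f (f' x) (Ici x) x)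
    (ha : f a ≤ 0) (bound : ∀ x ∈ Ico a b, f' x ≤ K * f x) :
    ∀ x ∈ Icc a b, f x ≤ 0 := by
  intro x hx
  simpa only [gronwallBound_ε0_δ0] using le_gronwallBound_of_liminf_deriv_right_le (ε := 0) hf
    (fun x hx _ hr => (hf' x hx).liminf_right_slope_le hr) ha
    (fun x hx => (bound x hx).trans_eq (add_zero _).symm) x hx

theorem hasDerivAt_posPart_sq (y : ℝ) : HasDerivAt (fun z : ℝ => z⁺ ^ 2) (2 * y⁺) y := by
  refine hasDerivAt_of_hasDerivAt_of_ne' (f := fun z : ℝ => z⁺ ^ 2) (g := fun z => 2 * z⁺)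
    (x := 0) (fun z hz => ?_) (by fun_prop) (by fun_prop) y
  rcases hz.lt_or_gt with hz | hz
  · have hzero : (fun z : ℝ => z⁺ ^ 2) =ᶠ[nhds z] fun _ => 0 := by
      filter_upwards [Iio_mem_nhds hz] with u hu
      simp [posPart_eq_zero.2 (le_of_lt (mem_Iio.1 hu))]
    rw [posPart_eq_zero.2 hz.le, mul_zero]
    exact (hasDerivAt_const z 0).congr_of_eventuallyEq hzero
  · have hsq : (fun z : ℝ => z⁺ ^ 2) =ᶠ[nhds z] fun u => u ^ 2 := by
      filter_upwards [Ioi_mem_nhds hz] with u hu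
      rw [posPart_eq_self.2 (le_of_lt (mem_Ioi.1 hu))]
    rw [posPart_eq_self.2 hz.le]
    simpa using (hasDerivAt_pow 2 z).congr_of_eventuallyEq hsq

def unitExcess (y : ℝ) : ℝ := (y - 1)⁺ - (-y)⁺

theorem unitExcess_of_nonpos {y : ℝ} (hy : y ≤ 0) : unitExcess y = y := by
  rw [unitExcess, posPart_eq_zero.2 (by linarith), posPart_eq_self.2 (by linarith)]
  ring

theorem unitExcess_of_one_le {y : ℝ} (hy : 1 ≤ y) : unitExcess y = y - 1 := by
  rw [unitExcess, posPart_eq_self.2 (by linarith), posPart_eq_zero.2 (by linarith), sub_zero]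

theorem unitExcess_eq_zero_iff {y : ℝ} : unitExcess y = 0 ↔ y ∈ Icc 0 1 := by
  rcases lt_or_ge y 0 with hy | hy
  · simp [unitExcess_of_nonpos hy.le, hy.ne, hy.not_ge]
  rcases le_or_gt y 1 with hy' | hy'
  · rw [unitExcess, posPart_eq_zero.2 (sub_nonpos.2 hy'), posPart_eq_zero.2 (neg_nonpos.2 hy)]
    simp [hy, hy']
  · simp [unitExcess_of_one_le hy'.le, sub_eq_zero, hy'.ne', hy'.not_ge]

theorem unitExcess_sq (y : ℝ) : unitExcess y ^ 2 = (y - 1)⁺ ^ 2 + (-y)⁺ ^ 2 := by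
  have hprod : (y - 1)⁺ * (-y)⁺ = 0 := by
    rcases le_or_gt y 0 with hy | hy
    · rw [posPart_eq_zero.2 (by linarith), zero_mul]
    · rw [posPart_eq_zero.2 (neg_nonpos.2 hy.le), mul_zero]
  rw [unitExcess]
  linear_combination (-2) * hprod

theorem hasDerivAt_unitExcess_sq (y : ℝ) :
    HasDerivAt (fun z => unitExcess z ^ 2) (2 * unitExcess y) y := by
  have h : HasDerivAt (fun z => (z - 1)⁺ ^ 2 + (-z)⁺ ^ 2) (2 * (y - 1)⁺ * 1 + 2 * (-y)⁺ * -1) y :=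
    ((hasDerivAt_posPart_sq (y - 1)).comp y ((hasDerivAt_id y).sub_const 1)).add
      ((hasDerivAt_posPart_sq (-y)).comp y (hasDerivAt_id y).neg)
  simp only [unitExcess_sq]
  convert h using 1
  rw [unitExcess]
  ring

theorem HasDerivAt.sum_unitExcess_sq {ι : Type*} [Fintype ι] {c : ℝ → ι → ℝ} {c' : ι → ℝ}
    {t : ℝ} (hc : HasDerivAt c c' t) :
    HasDerivAt (fun s => ∑ i, unitExcess (c s i) ^ 2) (∑ i, 2 * unitExcess (c t i) * c' i) t :=
  HasDerivAt.fun_sum fun i _ => by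
    exact (hasDerivAt_unitExcess_sq (c t i)).comp t (hasDerivAt_pi.1 hc i)

theorem neg_mul_le_abs_unitExcess {a : ℝ} (ha₀ : 0 ≤ a) (ha₁ : a ≤ 1) (y : ℝ) :
    -(a * y) ≤ |unitExcess y| := by
  rcases le_or_gt y 0 with hy | hy
  · rw [unitExcess_of_nonpos hy, abs_of_nonpos hy]
    nlinarith
  · nlinarith [abs_nonneg (unitExcess y)]

section SCS

variable {N : ℕ} {a : Fin N → Fin N → ℝ} {w x : Fin N → ℝ} {α β δ γ : ℝ}

theorem unitExcess_mul_scsF_le (hα : 0 ≤ α) (hβ : 0 ≤ β) (hδ : 0 ≤ δ) (hγ : 0 ≤ γ)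
    (hx : ∀ i, 0 ≤ x i) (hw : ∀ i, 0 ≤ w i) (ha : ∀ i j, 0 ≤ a i j ∧ a i j ≤ 1)
    {c : Fin N → ℝ} {M : ℝ} (hM : ∀ j, |c j| ≤ M) (i : Fin N) :
    unitExcess (c i) * scsF a w x α β δ γ c i ≤
      β / (δ * w i) * (1 + M) * |unitExcess (c i)| * ∑ j, |unitExcess (c j)| := by
  set D := 1 / (δ * w i)
  set S := ∑ j, a j i * c j
  set R := ∑ j, |unitExcess (c j)|
  have hD : 0 ≤ D := by have hwi := hw i; positivity
  have hαx : 0 ≤ α * x i := mul_nonneg hα (hx i)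
  have hγw : 0 ≤ γ * w i := mul_nonneg hγ (hw i)
  have hSR : -S ≤ R := by
    rw [← Finset.sum_neg_distrib]
    exact Finset.sum_le_sum fun j _ => neg_mul_le_abs_unitExcess (ha j i).1 (ha j i).2 (c j)
  have hcM := abs_le.1 (hM i)
  have hcoupling : ∀ u, 0 ≤ u → u ≤ 1 + M → D * β * -S * u ≤ D * β * R * (1 + M) :=
    fun u hu₀ hu₁ => mul_le_mul (by gcongr) hu₁ hu₀ (by positivity)
  have hF : scsF a w x α β δ γ c i = D * (α * x i) * (1 - c i) - D * β * -S * (1 - c i)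
      - γ * w i * c i := by
    simp only [scsF, D, S]; ring
  have hβD : β / (δ * w i) = D * β := by simp only [D]; ring
  rw [hβD, hF]
  rcases le_or_gt (c i) 0 with hc | hc
  · rw [unitExcess_of_nonpos hc, abs_of_nonpos hc]
    have hpush := hcoupling (1 - c i) (by linarith) (by linarith)
    nlinarith [hpush, mul_nonneg (mul_nonneg hD hαx) (by linarith : 0 ≤ 1 - c i),
      mul_nonpos_of_nonneg_of_nonpos hγw hc]
  rcases le_or_gt (c i) 1 with hc' | hc'
  · rw [unitExcess_eq_zero_iff.2 ⟨hc.le, hc'⟩]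
    simp
  · rw [unitExcess_of_one_le hc'.le, abs_of_pos (by linarith)]
    have hpush := hcoupling (c i - 1) (by linarith) (by linarith)
    nlinarith [hpush, mul_nonneg (mul_nonneg hD hαx) (by linarith : 0 ≤ c i - 1),
      mul_nonneg hγw hc.le]

theorem sum_unitExcess_mul_scsF_le (hα : 0 ≤ α) (hβ : 0 ≤ β) (hδ : 0 ≤ δ) (hγ : 0 ≤ γ)
    (hx : ∀ i, 0 ≤ x i) (hw : ∀ i, 0 ≤ w i) (ha : ∀ i j, 0 ≤ a i j ∧ a i j ≤ 1)
    {c : Fin N → ℝ} {M : ℝ} (hM : ∀ j, |c j| ≤ M) :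
    ∑ i, 2 * unitExcess (c i) * scsF a w x α β δ γ c i ≤
      (2 * N * ∑ i, β / (δ * w i) * (1 + M)) * ∑ i, unitExcess (c i) ^ 2 := by
  set R := ∑ j, |unitExcess (c j)|
  have hb : ∀ i, 0 ≤ β / (δ * w i) * (1 + M) := fun i => by
    have hwi := hw i
    have hM₀ := (abs_nonneg (c i)).trans (hM i)
    positivity
  have hR : R ^ 2 ≤ N * ∑ i, unitExcess (c i) ^ 2 := by
    simpa [sq_abs] using sq_sum_le_card_mul_sum_sq (s := Finset.univ) (f := fun i => |unitExcess (c i)|)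
  calc ∑ i, 2 * unitExcess (c i) * scsF a w x α β δ γ c i
      ≤ ∑ i, 2 * (β / (δ * w i) * (1 + M) * |unitExcess (c i)| * R) := by
        refine Finset.sum_le_sum fun i _ => ?_
        linarith [unitExcess_mul_scsF_le hα hβ hδ hγ hx hw ha hM i]
    _ ≤ ∑ i, 2 * (β / (δ * w i) * (1 + M) * R * R) := by
        gcongr with i
        · exact hb i
        · exact Finset.single_le_sum (f := fun j => |unitExcess (c j)|) (fun j _ => abs_nonneg _)
            (Finset.mem_univ i)
    _ = 2 * (∑ i, β / (δ * w i) * (1 + M)) * R ^ 2 := by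
        rw [Finset.mul_sum, Finset.sum_mul]
        exact Finset.sum_congr rfl fun i _ => by ring
    _ ≤ 2 * (∑ i, β / (δ * w i) * (1 + M)) * (N * ∑ i, unitExcess (c i) ^ 2) := by
        have hb_sum := Finset.sum_nonneg fun i (_ : i ∈ Finset.univ) => hb i
        gcongr
    _ = (2 * N * ∑ i, β / (δ * w i) * (1 + M)) * ∑ i, unitExcess (c i) ^ 2 := by ring

end SCS

theorem scs_invariance_general {N : ℕ} (a : Fin N → Fin N → ℝ) (w x : Fin N → ℝ)
    (α β δ γ : ℝ) (hα : 0 < α) (hβ : 0 < β) (hδ : 0 < δ) (hγ : 0 < γ)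
    (hx : ∀ i, 0 ≤ x i) (hw : ∀ i, 0 < w i)
    (ha : ∀ i j, a i j = 0 ∨ a i j = 1)
    (Tmax : ℝ) (C : ℝ → Fin N → ℝ)
    (hC : ∀ t ∈ Set.Ico (0 : ℝ) Tmax, HasDerivAt C (scsF a w x α β δ γ (C t)) t)
    (h0 : ∀ i, C 0 i ∈ Set.Icc (0 : ℝ) 1) :
    ∀ t ∈ Set.Ico (0 : ℝ) Tmax, ∀ i, C t i ∈ Set.Icc (0 : ℝ) 1 := by
  intro t ht i
  have hCt : ∀ s ∈ Icc 0 t, HasDerivAt C (scsF a w x α β δ γ (C s)) s :=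
    fun s hs => hC s ⟨hs.1, hs.2.trans_lt ht.2⟩
  obtain ⟨M, hM⟩ := isCompact_Icc.exists_bound_of_continuousOn
    fun s hs => (hCt s hs).continuousAt.continuousWithinAt
  have ha' : ∀ i j, 0 ≤ a i j ∧ a i j ≤ 1 := fun i j => by rcases ha i j with h | h <;> simp [h]
  have hV : ∀ s ∈ Icc 0 t, ∑ j, unitExcess (C s j) ^ 2 ≤ 0 :=
    nonpos_of_deriv_right_le_mul_self
      (fun s hs => (hCt s hs).sum_unitExcess_sq.continuousAt.continuousWithinAt)
      (fun s hs => (hCt s (Ico_subset_Icc_self hs)).sum_unitExcess_sq.hasDerivWithinAt)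
      (Finset.sum_eq_zero fun j _ => by rw [unitExcess_eq_zero_iff.2 (h0 j)]; ring).le
      fun s hs => sum_unitExcess_mul_scsF_le hα.le hβ.le hδ.le hγ.le hx (fun j => (hw j).le) ha'
        fun j => (norm_le_pi_norm (C s) j).trans (hM s (Ico_subset_Icc_self hs))
  have hi : unitExcess (C t i) ^ 2 ≤ 0 :=
    (Finset.single_le_sum (fun j _ => sq_nonneg (unitExcess (C t j))) (Finset.mem_univ i)).trans
      (hV t ⟨ht.1, le_rfl⟩)
  exact unitExcess_eq_zero_iff.1 (pow_eq_zero_iff two_ne_zero |>.1 (le_antisymm hi (sq_nonneg _)))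

/-- Positive invariance of the hypercube `[0,1]^N` for the SCS model: a solution
starting in `[0,1]^N` stays in `[0,1]^N` on its interval of existence `[0, Tmax)`. -/
theorem scs_invariance {N : ℕ} (a : Fin N → Fin N → ℝ) (w x : Fin N → ℝ)
    (α β δ γ : ℝ) (hα : 0 < α) (hβ : 0 < β) (hδ : 0 < δ) (hγ : 0 < γ)
    (hx : ∀ i, 0 ≤ x i) (hw : ∀ i, 0 < w i)
    (ha : ∀ i j, a i j = 0 ∨ a i j = 1)
    (Tmax : ℝ) (hT : 0 < Tmax) (C : ℝ → Fin N → ℝ)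
    (hC : ∀ t ∈ Set.Ico (0 : ℝ) Tmax, HasDerivAt C (scsF a w x α β δ γ (C t)) t)
    (h0 : ∀ i, C 0 i ∈ Set.Icc (0 : ℝ) 1) :
    ∀ t ∈ Set.Ico (0 : ℝ) Tmax, ∀ i, C t i ∈ Set.Icc (0 : ℝ) 1 :=
  scs_invariance_general a w x α β δ γ hα hβ hδ hγ hx hw ha Tmax C hC h0
end

section
/- Adding edges to the network increases expected compromise probabilities: let G₁ = (V, E₁) and G₂ = (V, E₂) with E₁ ⊆ E₂, and let C^{(1)}(t) and C^{(2)}(t) be solutions of the SCS models with adjacency matrices A(G₁) and A(G₂) respectively, with the same parameters α, β, δ, γ, the same attack strategy x, and the same initial condition in [0,1]^N. Then C_i^{(1)}(t) ≤ C_i^{(2)}(t) for all i and all t ∈ [0, T]. -/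
open Set Filter Topology

theorem HasDerivWithinAt.nonpos_of_lt_on_Ioo {f : ℝ → ℝ} {f' a t : ℝ} (hat : a < t)
    (hf : HasDerivWithinAt f f' (Iic t) t) (hlt : ∀ s ∈ Ioo a t, f t < f s) : f' ≤ 0 := by
  rw [hasDerivWithinAt_iff_tendsto_slope, Iic_sdiff_right] at hf
  refine le_of_tendsto hf ?_
  filter_upwards [Ioo_mem_nhdsLT hat] with s hs
  rw [slope_def_field]
  exact div_nonpos_of_nonneg_of_nonpos (sub_nonneg.2 (hlt s hs).le) (sub_nonpos.2 hs.2.le)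

theorem pos_of_deriv_pos_on_boundary {ι : Type*} [Finite ι] {φ φ' : ℝ → ι → ℝ} {a b : ℝ}
    (hφ : ContinuousOn φ (Icc a b))
    (hφ' : ∀ t ∈ Ioc a b, HasDerivWithinAt φ (φ' t) (Iic t) t)
    (ha : ∀ i, 0 < φ a i)
    (hbound : ∀ t ∈ Ioc a b, (∀ j, 0 ≤ φ t j) → ∀ i, φ t i = 0 → 0 < φ' t i) :
    ∀ t ∈ Icc a b, ∀ i, 0 < φ t i := by
  by_contra! hneg
  set S := Icc a b ∩ φ ⁻¹' {v | ∃ i, v i ≤ 0}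
  have hS : IsClosed S := hφ.preimage_isClosed_of_isClosed isClosed_Icc <| by
    simpa only [ofPred_exists] using
      isClosed_iUnion_of_finite fun i => isClosed_le (continuous_apply i) continuous_const
  obtain ⟨t, ht, i, hti⟩ := hneg
  have hSbdd : BddBelow S := ⟨a, fun s hs => hs.1.1⟩
  obtain ⟨⟨hat, htb⟩, i, hi⟩ : sInf S ∈ S := hS.csInf_mem ⟨t, ht, i, hti⟩ hSbdd
  set t₀ := sInf S
  have hbefore : ∀ s ∈ Ico a t₀, ∀ j, 0 < φ s j := fun s hs j => by
    by_contra! h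
    exact (csInf_le hSbdd ⟨⟨hs.1, hs.2.le.trans htb⟩, j, h⟩).not_gt hs.2
  have hat₀ : a < t₀ := hat.lt_of_ne fun h => (ha i).not_ge (h ▸ hi)
  have hderiv := hφ' t₀ ⟨hat₀, htb⟩
  have hzero : ∀ j, 0 ≤ φ t₀ j := fun j => by
    have hj := (hasDerivWithinAt_pi.1 hderiv j).continuousWithinAt.mono (Iio_subset_Iic_self)
    refine ge_of_tendsto hj ?_
    filter_upwards [Ioo_mem_nhdsLT hat₀] with s hs
    exact (hbefore s ⟨hs.1.le, hs.2⟩ j).le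
  have hi0 : φ t₀ i = 0 := le_antisymm hi (hzero i)
  refine (hbound t₀ ⟨hat₀, htb⟩ hzero i hi0).not_ge ?_
  exact (hasDerivWithinAt_pi.1 hderiv i).nonpos_of_lt_on_Ioo hat₀ fun s hs =>
    hi0 ▸ hbefore s ⟨hs.1.le, hs.2⟩ i

theorem nonneg_of_deriv_ge_on_boundary {ι : Type*} [Finite ι] {φ φ' : ℝ → ι → ℝ} {a b K : ℝ}
    (hφ : ContinuousOn φ (Icc a b))
    (hφ' : ∀ t ∈ Ioc a b, HasDerivWithinAt φ (φ' t) (Iic t) t)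
    (ha : ∀ i, 0 ≤ φ a i)
    (hbound : ∀ t ∈ Ioc a b, ∀ η ∈ Ioc (0 : ℝ) 1, (∀ j, -η ≤ φ t j) → ∀ i, φ t i = -η →
      -(K * η) ≤ φ' t i) :
    ∀ t ∈ Icc a b, ∀ i, 0 ≤ φ t i := by
  set L := max K 0 + 1
  set g : ℝ → ℝ := fun s => Real.exp (L * (s - a))
  have hg : ∀ s, HasDerivAt g (g s * L) s := fun s => by
    simpa using ((hasDerivAt_id s).sub_const a).const_mul L |>.exp
  have hε₀ : 0 < (g b)⁻¹ := inv_pos.2 (Real.exp_pos _)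
  have hperturbed : ∀ ε ∈ Ioo 0 (g b)⁻¹, ∀ t ∈ Icc a b, ∀ i, 0 < φ t i + ε * g t := by
    rintro ε ⟨hε, hεb⟩
    refine pos_of_deriv_pos_on_boundary (φ := fun t i => φ t i + ε * g t)
      (φ' := fun t i => φ' t i + ε * (g t * L)) ?_ ?_ ?_ ?_
    · exact continuousOn_pi.2 fun i =>
        ((continuous_apply i).comp_continuousOn hφ).add (by fun_prop)
    · exact fun t ht => hasDerivWithinAt_pi.2 fun i =>
        (hasDerivWithinAt_pi.1 (hφ' t ht) i).add ((hg t).hasDerivWithinAt.const_mul ε)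
    · intro i
      simpa [g] using add_pos_of_nonneg_of_pos (ha i) hε
    · intro t ht hnonneg i hi
      have hη : ε * g t ∈ Ioc (0 : ℝ) 1 := by
        refine ⟨mul_pos hε (Real.exp_pos _), ?_⟩
        have hgt : g t ≤ g b := Real.exp_le_exp.2 <|
          mul_le_mul_of_nonneg_left (by linarith [ht.2]) (by positivity)
        calc ε * g t ≤ (g b)⁻¹ * g b := by gcongr
          _ = 1 := inv_mul_cancel₀ (Real.exp_pos _).ne'
      have := hbound t ht (ε * g t) hη (fun j => by linarith [hnonneg j]) i (by linarith)
      have hKL : K < L := by linarith [le_max_left K 0]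
      nlinarith [hη.1]
  intro t ht i
  have hlim : Tendsto (fun ε => -(ε * g t)) (𝓝[>] 0) (𝓝 0) := by
    have hcont : Continuous fun ε : ℝ => -(ε * g t) := by fun_prop
    simpa using (hcont.tendsto 0).mono_left nhdsWithin_le_nhds
  refine le_of_tendsto hlim ?_
  filter_upwards [Ioo_mem_nhdsGT hε₀] with ε hε
  linarith [hperturbed ε hε t ht i]

section SCS
variable {N : ℕ} {a a₁ a₂ : Fin N → Fin N → ℝ} {w x : Fin N → ℝ} {α β δ γ : ℝ}
  {c d : Fin N → ℝ} {i : Fin N} {η : ℝ}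

theorem neg_mul_le_scsF_of_eq_neg (ha : ∀ j, 0 ≤ a j i) (hα : 0 ≤ α) (hx : 0 ≤ x i)
    (hβ : 0 ≤ β) (hδ : 0 ≤ δ) (hw : 0 ≤ w i) (hγ : 0 ≤ γ) (hη : η ∈ Icc (0 : ℝ) 1)
    (hc : ∀ j, -η ≤ c j) (hci : c i = -η) :
    -(2 * β * (∑ j, a j i) / (δ * w i) * η) ≤ scsF a w x α β δ γ c i := by
  have hsum : -(η * ∑ j, a j i) ≤ ∑ j, a j i * c j := by
    rw [← neg_mul, Finset.mul_sum]
    exact Finset.sum_le_sum fun j _ => by nlinarith [ha j, hc j]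
  have hS : 0 ≤ ∑ j, a j i := Finset.sum_nonneg fun j _ => ha j
  have hinf : -(2 * β * (∑ j, a j i) * η) ≤
      (α * x i + β * ∑ j, a j i * c j) * (1 + η) := by
    have hA : 0 ≤ α * x i + β * ∑ j, a j i * c j + β * (∑ j, a j i) * η := by
      nlinarith [mul_nonneg hα hx, mul_le_mul_of_nonneg_left hsum hβ]
    nlinarith [mul_nonneg hA (by linarith [hη.1] : (0 : ℝ) ≤ 1 + η),
      mul_nonneg (mul_nonneg (mul_nonneg hβ hS) hη.1) (sub_nonneg.2 hη.2)]
  have hrec : -(2 * β * (∑ j, a j i) / (δ * w i) * η) ≤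
      1 / (δ * w i) * (α * x i + β * ∑ j, a j i * c j) * (1 + η) :=
    calc -(2 * β * (∑ j, a j i) / (δ * w i) * η)
        = -(2 * β * (∑ j, a j i) * η) / (δ * w i) := by ring
      _ ≤ (α * x i + β * ∑ j, a j i * c j) * (1 + η) / (δ * w i) :=
        div_le_div_of_nonneg_right hinf (mul_nonneg hδ hw)
      _ = _ := by ring
  simp only [scsF, hci, sub_neg_eq_add]
  nlinarith [mul_nonneg (mul_nonneg hγ hw) hη.1]

theorem scsF_nonpos_of_one_le (ha : ∀ j, 0 ≤ a j i) (hα : 0 ≤ α) (hx : 0 ≤ x i)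
    (hβ : 0 ≤ β) (hδ : 0 ≤ δ) (hw : 0 ≤ w i) (hγ : 0 ≤ γ) (hc : ∀ j, 0 ≤ c j)
    (hci : 1 ≤ c i) : scsF a w x α β δ γ c i ≤ 0 := by
  have hrate : 0 ≤ 1 / (δ * w i) * (α * x i + β * ∑ j, a j i * c j) :=
    mul_nonneg (by positivity) (add_nonneg (mul_nonneg hα hx)
      (mul_nonneg hβ (Finset.sum_nonneg fun j _ => mul_nonneg (ha j) (hc j))))
  simp only [scsF]
  nlinarith [mul_nonneg (mul_nonneg hγ hw) (hc i)]

theorem neg_mul_le_scsF_sub_scsF (ha₁ : ∀ j, 0 ≤ a₁ j i) (h₁₂ : ∀ j, a₁ j i ≤ a₂ j i)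
    (hα : 0 ≤ α) (hx : 0 ≤ x i) (hβ : 0 ≤ β) (hδ : 0 ≤ δ) (hw : 0 ≤ w i) (hγ : 0 ≤ γ)
    (hη : 0 ≤ η) (hc : ∀ j, 0 ≤ c j) (hd : ∀ j, 0 ≤ d j) (hdi : d i ≤ 1)
    (hdc : ∀ j, -η ≤ d j - c j) (hdci : d i - c i = -η) :
    -(β * (∑ j, a₁ j i) / (δ * w i) * η) ≤
      scsF a₂ w x α β δ γ d i - scsF a₁ w x α β δ γ c i := by
  set A₁ := α * x i + β * ∑ j, a₁ j i * c j
  set A₂ := α * x i + β * ∑ j, a₂ j i * d j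
  have hS : 0 ≤ ∑ j, a₁ j i := Finset.sum_nonneg fun j _ => ha₁ j
  have hdiff : -(η * ∑ j, a₁ j i) ≤ ∑ j, a₂ j i * d j - ∑ j, a₁ j i * c j := by
    rw [← neg_mul, Finset.mul_sum, ← Finset.sum_sub_distrib]
    exact Finset.sum_le_sum fun j _ => by
      nlinarith [mul_nonneg (sub_nonneg.2 (h₁₂ j)) (hd j),
        mul_le_mul_of_nonneg_left (hdc j) (ha₁ j)]
  have hA₁ : 0 ≤ A₁ := add_nonneg (mul_nonneg hα hx)
    (mul_nonneg hβ (Finset.sum_nonneg fun j _ => mul_nonneg (ha₁ j) (hc j)))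
  have hbracket : -(β * (∑ j, a₁ j i) * η) ≤ (A₂ - A₁) * (1 - d i) + A₁ * η := by
    have hA : 0 ≤ A₂ - A₁ + β * (∑ j, a₁ j i) * η := by
      nlinarith [mul_le_mul_of_nonneg_left hdiff hβ]
    nlinarith [mul_nonneg hA (sub_nonneg.2 hdi), mul_nonneg hA₁ hη,
      mul_nonneg (mul_nonneg (mul_nonneg hβ hS) hη) (hd i)]
  have hid : scsF a₂ w x α β δ γ d i - scsF a₁ w x α β δ γ c i =
      ((A₂ - A₁) * (1 - d i) + A₁ * η) / (δ * w i) + γ * w i * η := by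
    simp only [scsF, show c i = d i + η by linarith]
    ring
  rw [hid]
  calc -(β * (∑ j, a₁ j i) / (δ * w i) * η)
      = -(β * (∑ j, a₁ j i) * η) / (δ * w i) := by ring
    _ ≤ ((A₂ - A₁) * (1 - d i) + A₁ * η) / (δ * w i) :=
      div_le_div_of_nonneg_right hbracket (mul_nonneg hδ hw)
    _ ≤ _ := le_add_of_nonneg_right (mul_nonneg (mul_nonneg hγ hw) hη)

theorem scs_solution_nonneg (ha : ∀ i j, 0 ≤ a i j) (hα : 0 ≤ α) (hx : ∀ i, 0 ≤ x i)
    (hβ : 0 ≤ β) (hδ : 0 ≤ δ) (hw : ∀ i, 0 ≤ w i) (hγ : 0 ≤ γ) {C : ℝ → Fin N → ℝ} {T : ℝ}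
    (hC : ∀ t ∈ Icc 0 T, HasDerivAt C (scsF a w x α β δ γ (C t)) t) (hC₀ : ∀ i, 0 ≤ C 0 i) :
    ∀ t ∈ Icc 0 T, ∀ i, 0 ≤ C t i := by
  obtain ⟨K, hK⟩ := Finite.exists_le fun i => 2 * β * (∑ j, a j i) / (δ * w i)
  refine nonneg_of_deriv_ge_on_boundary (K := K)
    (fun t ht => (hC t ht).continuousAt.continuousWithinAt)
    (fun t ht => (hC t (Ioc_subset_Icc_self ht)).hasDerivWithinAt) hC₀ ?_
  intro t _ η hη hCη i hCi
  exact (neg_le_neg (mul_le_mul_of_nonneg_right (hK i) hη.1.le)).trans <|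
    neg_mul_le_scsF_of_eq_neg (fun j => ha j i) hα (hx i) hβ hδ (hw i) hγ
      (Ioc_subset_Icc_self hη) hCη hCi

theorem scs_solution_mem_Icc (ha : ∀ i j, 0 ≤ a i j) (hα : 0 ≤ α) (hx : ∀ i, 0 ≤ x i)
    (hβ : 0 ≤ β) (hδ : 0 ≤ δ) (hw : ∀ i, 0 ≤ w i) (hγ : 0 ≤ γ) {C : ℝ → Fin N → ℝ} {T : ℝ}
    (hC : ∀ t ∈ Icc 0 T, HasDerivAt C (scsF a w x α β δ γ (C t)) t)
    (hC₀ : ∀ i, C 0 i ∈ Icc 0 1) : ∀ t ∈ Icc 0 T, ∀ i, C t i ∈ Icc 0 1 := by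
  have hnonneg := scs_solution_nonneg ha hα hx hβ hδ hw hγ hC fun i => (hC₀ i).1
  have hle := nonneg_of_deriv_ge_on_boundary (φ := fun t => 1 - C t) (K := 0)
    (fun t ht => ((hC t ht).const_sub 1).continuousAt.continuousWithinAt)
    (fun t ht => ((hC t (Ioc_subset_Icc_self ht)).const_sub 1).hasDerivWithinAt)
    (fun i => sub_nonneg.2 (hC₀ i).2) fun t ht η hη _ i hCi => by
      simpa using scsF_nonpos_of_one_le (fun j => ha j i) hα (hx i) hβ hδ (hw i) hγ
        (hnonneg t (Ioc_subset_Icc_self ht)) (by linarith [hη.1, show 1 - C t i = -η from hCi])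
  exact fun t ht i => ⟨hnonneg t ht i, by simpa using hle t ht i⟩

end SCS

theorem scs_monotone_in_graph_general {N : ℕ} (a1 a2 : Fin N → Fin N → ℝ)
    (ha1 : ∀ i j, a1 i j = 0 ∨ a1 i j = 1) (ha2 : ∀ i j, a2 i j = 0 ∨ a2 i j = 1)
    (h12 : ∀ i j, a1 i j ≤ a2 i j)
    (w x : Fin N → ℝ) (α β δ γ : ℝ)
    (hα : 0 < α) (hβ : 0 < β) (hδ : 0 < δ) (hγ : 0 < γ)
    (hx : ∀ i, 0 ≤ x i) (hw : ∀ i, 0 < w i)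
    (T : ℝ) (C1 C2 : ℝ → Fin N → ℝ)
    (hC1 : ∀ t ∈ Set.Icc (0 : ℝ) T, HasDerivAt C1 (scsF a1 w x α β δ γ (C1 t)) t)
    (hC2 : ∀ t ∈ Set.Icc (0 : ℝ) T, HasDerivAt C2 (scsF a2 w x α β δ γ (C2 t)) t)
    (h0 : C1 0 = C2 0) (h0box : ∀ i, C1 0 i ∈ Set.Icc (0 : ℝ) 1) :
    ∀ t ∈ Set.Icc (0 : ℝ) T, ∀ i, C1 t i ≤ C2 t i := by
  have hnonneg : ∀ a : Fin N → Fin N → ℝ, (∀ i j, a i j = 0 ∨ a i j = 1) → ∀ i j, 0 ≤ a i j :=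
    fun a ha i j => by rcases ha i j with h | h <;> simp [h]
  have hw' : ∀ i, 0 ≤ w i := fun i => (hw i).le
  have hC1box := scs_solution_mem_Icc (hnonneg a1 ha1) hα.le hx hβ.le hδ.le hw' hγ.le hC1 h0box
  have hC2box := scs_solution_mem_Icc (hnonneg a2 ha2) hα.le hx hβ.le hδ.le hw' hγ.le hC2
    (h0 ▸ h0box)
  obtain ⟨K, hK⟩ := Finite.exists_le fun i => β * (∑ j, a1 j i) / (δ * w i)
  have hgap := nonneg_of_deriv_ge_on_boundary (φ := C2 - C1) (K := K)
    (fun t ht => ((hC2 t ht).sub (hC1 t ht)).continuousAt.continuousWithinAt)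
    (fun t ht => ((hC2 t (Ioc_subset_Icc_self ht)).sub
      (hC1 t (Ioc_subset_Icc_self ht))).hasDerivWithinAt)
    (by simp [h0]) fun t ht η hη hgapη i hgapi => by
      have ht' := Ioc_subset_Icc_self ht
      exact (neg_le_neg (mul_le_mul_of_nonneg_right (hK i) hη.1.le)).trans <|
        neg_mul_le_scsF_sub_scsF (fun j => hnonneg a1 ha1 j i) (fun j => h12 j i) hα.le (hx i)
          hβ.le hδ.le (hw' i) hγ.le hη.1.le (fun j => (hC1box t ht' j).1)
          (fun j => (hC2box t ht' j).1) (hC2box t ht' i).2 hgapη hgapi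
  exact fun t ht i => sub_nonneg.1 (hgap t ht i)

/-- Adding edges increases expected compromise probabilities: if the adjacency
matrix of `G₁` is entrywise below that of `G₂` (i.e. `E₁ ⊆ E₂`), then the solution
of the SCS model on `G₁` stays componentwise below the one on `G₂` on `[0, T]`,
for the same parameters, attack strategy and initial condition in `[0,1]^N`. -/
theorem scs_monotone_in_graph {N : ℕ} (a1 a2 : Fin N → Fin N → ℝ)
    (ha1 : ∀ i j, a1 i j = 0 ∨ a1 i j = 1) (ha2 : ∀ i j, a2 i j = 0 ∨ a2 i j = 1)
    (hsym1 : ∀ i j, a1 i j = a1 j i) (hsym2 : ∀ i j, a2 i j = a2 j i)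
    (h12 : ∀ i j, a1 i j ≤ a2 i j)
    (w x : Fin N → ℝ) (α β δ γ : ℝ)
    (hα : 0 < α) (hβ : 0 < β) (hδ : 0 < δ) (hγ : 0 < γ)
    (hx : ∀ i, 0 ≤ x i) (hw : ∀ i, 0 < w i)
    (T : ℝ) (hT : 0 < T) (C1 C2 : ℝ → Fin N → ℝ)
    (hC1 : ∀ t ∈ Set.Icc (0 : ℝ) T, HasDerivAt C1 (scsF a1 w x α β δ γ (C1 t)) t)
    (hC2 : ∀ t ∈ Set.Icc (0 : ℝ) T, HasDerivAt C2 (scsF a2 w x α β δ γ (C2 t)) t)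
    (h0 : C1 0 = C2 0) (h0box : ∀ i, C1 0 i ∈ Set.Icc (0 : ℝ) 1) :
    ∀ t ∈ Set.Icc (0 : ℝ) T, ∀ i, C1 t i ≤ C2 t i :=
  scs_monotone_in_graph_general a1 a2 ha1 ha2 h12 w x α β δ γ hα hβ hδ hγ hx hw T C1 C2 hC1 hC2 h0
    h0box
end

section
/- The risk of an organization increases with the addition of new edges: if G₁ is a spanning subgraph of G₂ (same vertex set, E₁ ⊆ E₂), then R(G₁, α, β, δ, γ, T, B) ≤ R(G₂, α, β, δ, γ, T, B). -/
/-!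
Box invariance of `[0,1]^N` and the comparison of trajectories are both instances of one
first-crossing principle for finite systems: if `g k 0 ≥ 0` and, at any time where all components
are `≥ -η` and component `k` equals `-η`, one has `g' k ≥ -K η`, then `g ≥ 0` (perturb by
`ε exp((K + 1) t)`, which can only cross zero upwards, and let `ε → 0`). The SCS field is
cooperative: if `C₂ ≥ C₁ - η`, `0 ≤ C₁ ≤ 1` and `a₁ ≤ a₂`, then the drive of node `i` under
`a₂` exceeds the one under `a₁` up to `O(η)`. So adding edges raises every trajectory, hence the
loss of every strategy, and the suprema compare because the losses of `G₂` are bounded by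
`T ∑ w_i`.
-/

open Set Filter Topology

theorem forall_pos_of_hasDerivAt_pos_of_eq_zero {ι : Type*} [Finite ι] {T : ℝ}
    {f f' : ι → ℝ → ℝ} (hf : ∀ k, ∀ t ∈ Icc 0 T, HasDerivAt (f k) (f' k t) t)
    (h0 : ∀ k, 0 < f k 0)
    (hcross : ∀ t ∈ Icc 0 T, (∀ j, 0 ≤ f j t) → ∀ k, f k t = 0 → 0 < f' k t) :
    ∀ t ∈ Icc 0 T, ∀ k, 0 < f k t := by
  by_contra! hneg
  obtain ⟨t₁, ht₁, k₁, hk₁⟩ := hneg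
  set A := {t ∈ Icc 0 T | ∃ k, f k t ≤ 0}
  have hA : IsClosed A := by
    have : A = ⋃ k, Icc 0 T ∩ f k ⁻¹' Iic 0 := by ext; simp [A]
    rw [this]
    exact isClosed_iUnion_of_finite fun k =>
      (HasDerivAt.continuousOn (hf k)).preimage_isClosed_of_isClosed isClosed_Icc isClosed_Iic
  obtain ⟨t₀, ⟨ht₀, k₀, hk₀⟩, hfirst⟩ :=
    (isCompact_Icc.of_isClosed_subset hA fun t ht => ht.1).exists_isLeast ⟨t₁, ht₁, k₁, hk₁⟩
  have hbefore : ∀ t ∈ Ico 0 t₀, ∀ k, 0 < f k t := fun t ht k => by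
    by_contra! h
    exact ht.2.not_ge (hfirst ⟨⟨ht.1, ht.2.le.trans ht₀.2⟩, k, h⟩)
  have ht₀pos : 0 < t₀ := ht₀.1.lt_of_ne fun h => (h0 k₀).not_ge (h ▸ hk₀)
  have hnonneg : ∀ k, 0 ≤ f k t₀ := fun k =>
    ge_of_tendsto ((hf k t₀ ht₀).continuousAt.tendsto.mono_left nhdsWithin_le_nhds)
      (by filter_upwards [Ioo_mem_nhdsLT ht₀pos] with t ht
          using (hbefore t (Ioo_subset_Ico_self ht) k).le)
  have hzero : f k₀ t₀ = 0 := hk₀.antisymm (hnonneg k₀)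
  -- a positive derivative at a zero forces `f k₀` to be negative just before `t₀`
  have hslope := ((hasDerivAt_iff_tendsto_slope.mp (hf k₀ t₀ ht₀)).eventually
    (eventually_gt_nhds (hcross t₀ ht₀ hnonneg k₀ hzero))).filter_mono (nhdsLT_le_nhdsNE t₀)
  obtain ⟨t, hpos, ht⟩ := (hslope.and (Ioo_mem_nhdsLT ht₀pos)).exists
  exact (neg_of_slope_pos ht.2 hpos hzero).not_gt (hbefore t (Ioo_subset_Ico_self ht) k₀)

theorem forall_nonneg_of_hasDerivAt_ge_neg_mul {ι : Type*} [Finite ι] {T K : ℝ}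
    {g g' : ι → ℝ → ℝ} (hK : 0 ≤ K) (hg : ∀ k, ∀ t ∈ Icc 0 T, HasDerivAt (g k) (g' k t) t)
    (h0 : ∀ k, 0 ≤ g k 0)
    (hcross : ∀ t ∈ Icc 0 T, ∀ η ∈ Ioc 0 1, (∀ j, -η ≤ g j t) → ∀ k, g k t = -η →
      -(K * η) ≤ g' k t) :
    ∀ t ∈ Icc 0 T, ∀ k, 0 ≤ g k t := by
  set L := K + 1
  have hperturbed : ∀ ε ∈ Ioo 0 (Real.exp (-(T * L))), ∀ t ∈ Icc 0 T, ∀ k,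
      0 < g k t + ε * Real.exp (t * L) := by
    rintro ε ⟨hε, hεT⟩
    refine forall_pos_of_hasDerivAt_pos_of_eq_zero
      (fun k t ht => (hg k t ht).add ((hasDerivAt_mul_const L).exp.const_mul ε))
      (fun k => by simp only [zero_mul, Real.exp_zero, mul_one]; linarith [h0 k]) ?_
    intro t ht hnonneg k hk
    have hη : ε * Real.exp (t * L) ∈ Ioc 0 1 := by
      refine ⟨by positivity, ?_⟩
      calc ε * Real.exp (t * L) ≤ Real.exp (-(T * L)) * Real.exp (T * L) := by
              gcongr; exact ht.2
        _ = 1 := by rw [← Real.exp_add, neg_add_cancel, Real.exp_zero]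
    have := hcross t ht _ hη (fun j => by linarith [hnonneg j]) k (by linarith)
    nlinarith [hη.1]
  intro t ht k
  have hlim : Tendsto (fun ε => g k t + ε * Real.exp (t * L)) (𝓝[>] 0) (𝓝 (g k t)) :=
    ((continuous_const.add (continuous_mul_const _)).tendsto' 0 _ (by simp)).mono_left
      nhdsWithin_le_nhds
  exact ge_of_tendsto hlim (by
    filter_upwards [Ioo_mem_nhdsGT (Real.exp_pos (-(T * L)))] with ε hε
    using (hperturbed ε hε t ht k).le)

theorem sum_mul_sub_card_mul_le {ι : Type*} [Fintype ι] {a b u v : ι → ℝ} {η : ℝ}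
    (ha : ∀ j, 0 ≤ a j) (hab : ∀ j, a j ≤ b j) (hb : ∀ j, b j ≤ 1) (hu : ∀ j, 0 ≤ u j)
    (huv : ∀ j, u j - η ≤ v j) (hη : 0 ≤ η) :
    ∑ j, a j * u j - Fintype.card ι * η ≤ ∑ j, b j * v j := by
  rw [← nsmul_eq_mul, ← Finset.card_univ, ← Finset.sum_const, ← Finset.sum_sub_distrib]
  refine Finset.sum_le_sum fun j _ => ?_
  nlinarith [mul_le_mul_of_nonneg_left (huv j) ((ha j).trans (hab j)),
    mul_le_mul_of_nonneg_right (hab j) (hu j), mul_le_mul_of_nonneg_right (hb j) hη]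

section SCS

variable {N : ℕ} {a a₁ a₂ : Fin N → Fin N → ℝ} {w x : Fin N → ℝ} {α β δ γ T : ℝ}

noncomputable def scsDrive (a : Fin N → Fin N → ℝ) (w x : Fin N → ℝ) (α β δ : ℝ)
    (C : Fin N → ℝ) (i : Fin N) : ℝ :=
  1 / (δ * w i) * (α * x i + β * ∑ j, a j i * C j)

theorem scsF_apply (C : Fin N → ℝ) (i : Fin N) :
    scsF a w x α β δ γ C i = scsDrive a w x α β δ C i * (1 - C i) - γ * w i * C i :=
  rfl

theorem scsDrive_nonneg (hα : 0 ≤ α) (hβ : 0 ≤ β) (hδ : 0 < δ) (hw : ∀ i, 0 < w i)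
    (hx : ∀ i, 0 ≤ x i) (ha : ∀ i j, 0 ≤ a i j) {C : Fin N → ℝ} (hC : ∀ j, 0 ≤ C j) (i : Fin N) :
    0 ≤ scsDrive a w x α β δ C i :=
  mul_nonneg (one_div_nonneg.2 (mul_pos hδ (hw i)).le) <| add_nonneg (mul_nonneg hα (hx i)) <|
    mul_nonneg hβ <| Finset.sum_nonneg fun j _ => mul_nonneg (ha j i) (hC j)

noncomputable def scsCouplingConst (w : Fin N → ℝ) (β δ : ℝ) : ℝ :=
  ∑ k, β * N / (δ * w k)

theorem scsCouplingConst_nonneg (hβ : 0 ≤ β) (hδ : 0 < δ) (hw : ∀ i, 0 < w i) :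
    0 ≤ scsCouplingConst w β δ :=
  Finset.sum_nonneg fun k _ => div_nonneg (by positivity) (mul_pos hδ (hw k)).le

theorem scsDrive_sub_le (hβ : 0 ≤ β) (hδ : 0 < δ) (hw : ∀ i, 0 < w i)
    (ha₁ : ∀ i j, 0 ≤ a₁ i j) (h₁₂ : ∀ i j, a₁ i j ≤ a₂ i j) (ha₂ : ∀ i j, a₂ i j ≤ 1)
    {C₁ C₂ : Fin N → ℝ} {η : ℝ} (hC₁ : ∀ j, 0 ≤ C₁ j) (hC : ∀ j, C₁ j - η ≤ C₂ j) (hη : 0 ≤ η)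
    (i : Fin N) :
    scsDrive a₁ w x α β δ C₁ i - scsCouplingConst w β δ * η ≤ scsDrive a₂ w x α β δ C₂ i := by
  have hsum := sum_mul_sub_card_mul_le (fun j => ha₁ j i) (fun j => h₁₂ j i) (fun j => ha₂ j i)
    hC₁ hC hη
  rw [Fintype.card_fin] at hsum
  have hc : β * N / (δ * w i) ≤ scsCouplingConst w β δ :=
    Finset.single_le_sum (fun k _ => div_nonneg (by positivity) (mul_pos hδ (hw k)).le)
      (Finset.mem_univ i)
  have hδw : 0 < δ * w i := mul_pos hδ (hw i)
  calc scsDrive a₁ w x α β δ C₁ i - scsCouplingConst w β δ * η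
      ≤ scsDrive a₁ w x α β δ C₁ i - β * N / (δ * w i) * η := by gcongr
    _ = 1 / (δ * w i) * (α * x i + β * (∑ j, a₁ j i * C₁ j - N * η)) := by
      unfold scsDrive; ring
    _ ≤ scsDrive a₂ w x α β δ C₂ i := by unfold scsDrive; gcongr

theorem scs_sol_nonneg (hα : 0 ≤ α) (hβ : 0 ≤ β) (hδ : 0 < δ) (hγ : 0 ≤ γ) (hw : ∀ i, 0 < w i)
    (hx : ∀ i, 0 ≤ x i) (ha_nonneg : ∀ i j, 0 ≤ a i j) (ha_le_one : ∀ i j, a i j ≤ 1)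
    {C : ℝ → Fin N → ℝ} (hC₀ : ∀ i, 0 ≤ C 0 i)
    (hC : ∀ t ∈ Icc 0 T, HasDerivAt C (scsF a w x α β δ γ (C t)) t) :
    ∀ t ∈ Icc 0 T, ∀ i, 0 ≤ C t i := by
  refine forall_nonneg_of_hasDerivAt_ge_neg_mul (g := fun i t => C t i)
    (mul_nonneg zero_le_two (scsCouplingConst_nonneg hβ hδ hw))
    (fun i t ht => hasDerivAt_pi.1 (hC t ht) i) hC₀ ?_
  intro t ht η hη hge i hi
  -- compare with the zero state on the empty graph, whose drive is `α x i / (δ w i) ≥ 0`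
  have hs := scsDrive_sub_le (x := x) (α := α) (C₁ := 0) hβ hδ hw (fun _ _ => le_rfl) ha_nonneg
    ha_le_one (fun _ => le_rfl) (by simpa using hge) hη.1.le i
  have hs₀ := scsDrive_nonneg hα hβ hδ hw hx (fun _ _ => le_rfl) (C := 0) (fun _ => le_rfl) i
  have hc := scsCouplingConst_nonneg (w := w) hβ hδ hw
  rw [scsF_apply, hi]
  nlinarith [mul_nonneg
      (by linarith : 0 ≤ scsDrive a w x α β δ (C t) i + scsCouplingConst w β δ * η)
      (by linarith [hη.1] : 0 ≤ 1 + η),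
    mul_nonneg (mul_nonneg hc hη.1.le) (sub_nonneg.2 hη.2),
    mul_nonneg (mul_nonneg hγ (hw i).le) hη.1.le]

theorem scs_sol_le_one (hα : 0 ≤ α) (hβ : 0 ≤ β) (hδ : 0 < δ) (hγ : 0 ≤ γ) (hw : ∀ i, 0 < w i)
    (hx : ∀ i, 0 ≤ x i) (ha_nonneg : ∀ i j, 0 ≤ a i j) {C : ℝ → Fin N → ℝ} (hC₀ : ∀ i, C 0 i ≤ 1)
    (hC_nonneg : ∀ t ∈ Icc 0 T, ∀ i, 0 ≤ C t i)
    (hC : ∀ t ∈ Icc 0 T, HasDerivAt C (scsF a w x α β δ γ (C t)) t) :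
    ∀ t ∈ Icc 0 T, ∀ i, C t i ≤ 1 := by
  have hbound := forall_nonneg_of_hasDerivAt_ge_neg_mul (K := 0) (g := fun i t => 1 - C t i)
    le_rfl (fun i t ht => (hasDerivAt_pi.1 (hC t ht) i).const_sub 1)
    (fun i => sub_nonneg.2 (hC₀ i)) ?_
  · exact fun t ht i => sub_nonneg.1 (hbound t ht i)
  intro t ht η hη _ i hi
  have hs := scsDrive_nonneg hα hβ hδ hw hx ha_nonneg (hC_nonneg t ht) i
  rw [scsF_apply, show C t i = 1 + η by linarith]
  nlinarith [mul_nonneg hs hη.1.le,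
    mul_nonneg (mul_nonneg hγ (hw i).le) (by linarith [hη.1] : 0 ≤ 1 + η)]

theorem scs_sol_mem_Icc (hα : 0 ≤ α) (hβ : 0 ≤ β) (hδ : 0 < δ) (hγ : 0 ≤ γ) (hw : ∀ i, 0 < w i)
    (hx : ∀ i, 0 ≤ x i) (ha : ∀ i j, a i j ∈ Icc 0 1) {C : ℝ → Fin N → ℝ}
    (hC₀ : ∀ i, C 0 i ∈ Icc 0 1)
    (hC : ∀ t ∈ Icc 0 T, HasDerivAt C (scsF a w x α β δ γ (C t)) t) :
    ∀ t ∈ Icc 0 T, ∀ i, C t i ∈ Icc 0 1 := by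
  have hnonneg := scs_sol_nonneg hα hβ hδ hγ hw hx (fun i j => (ha i j).1) (fun i j => (ha i j).2)
    (fun i => (hC₀ i).1) hC
  exact fun t ht i => ⟨hnonneg t ht i,
    scs_sol_le_one hα hβ hδ hγ hw hx (fun i j => (ha i j).1) (fun i => (hC₀ i).2) hnonneg hC t ht i⟩

theorem scs_sol_le_of_adj_le (hα : 0 ≤ α) (hβ : 0 ≤ β) (hδ : 0 < δ) (hγ : 0 ≤ γ)
    (hw : ∀ i, 0 < w i) (hx : ∀ i, 0 ≤ x i) (ha₁ : ∀ i j, 0 ≤ a₁ i j) (h₁₂ : ∀ i j, a₁ i j ≤ a₂ i j)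
    (ha₂ : ∀ i j, a₂ i j ≤ 1) {C₁ C₂ : ℝ → Fin N → ℝ} (h₀ : ∀ i, C₁ 0 i ≤ C₂ 0 i)
    (hC₁_mem : ∀ t ∈ Icc 0 T, ∀ i, C₁ t i ∈ Icc 0 1)
    (hC₁ : ∀ t ∈ Icc 0 T, HasDerivAt C₁ (scsF a₁ w x α β δ γ (C₁ t)) t)
    (hC₂ : ∀ t ∈ Icc 0 T, HasDerivAt C₂ (scsF a₂ w x α β δ γ (C₂ t)) t) :
    ∀ t ∈ Icc 0 T, ∀ i, C₁ t i ≤ C₂ t i := by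
  have hdiff := forall_nonneg_of_hasDerivAt_ge_neg_mul (g := fun i t => C₂ t i - C₁ t i)
    (mul_nonneg zero_le_two (scsCouplingConst_nonneg hβ hδ hw))
    (fun i t ht => (hasDerivAt_pi.1 (hC₂ t ht) i).sub (hasDerivAt_pi.1 (hC₁ t ht) i))
    (fun i => sub_nonneg.2 (h₀ i)) ?_
  · exact fun t ht i => sub_nonneg.1 (hdiff t ht i)
  intro t ht η hη hge i hi
  obtain ⟨hC₁i₀, hC₁i₁⟩ := hC₁_mem t ht i
  have hs := scsDrive_sub_le (x := x) (α := α) (C₂ := C₂ t) hβ hδ hw ha₁ h₁₂ ha₂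
    (fun j => (hC₁_mem t ht j).1) (fun j => by linarith [hge j]) hη.1.le i
  have hs₁ := scsDrive_nonneg hα hβ hδ hw hx ha₁ (fun j => (hC₁_mem t ht j).1) i
  have hc := scsCouplingConst_nonneg (w := w) hβ hδ hw
  rw [scsF_apply, scsF_apply, show C₂ t i = C₁ t i - η by linarith]
  nlinarith [mul_le_mul_of_nonneg_right hs (by linarith [hη.1] : 0 ≤ 1 - C₁ t i + η),
    mul_nonneg hs₁ hη.1.le,
    mul_nonneg (mul_nonneg hc hη.1.le) (by linarith [hη.2] : 0 ≤ 1 + C₁ t i - η),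
    mul_nonneg (mul_nonneg hγ (hw i).le) hη.1.le]

end SCS

theorem intervalIntegral_sum_mul_mono {ι : Type*} [Fintype ι] {T : ℝ} (hT : 0 ≤ T)
    {w : ι → ℝ} (hw : ∀ i, 0 ≤ w i) {C D : ℝ → ι → ℝ} (hC : ContinuousOn C (Icc 0 T))
    (hD : ContinuousOn D (Icc 0 T)) (hCD : ∀ t ∈ Icc 0 T, ∀ i, C t i ≤ D t i) :
    ∫ t in 0..T, ∑ i, w i * C t i ≤ ∫ t in 0..T, ∑ i, w i * D t i := by
  have hint : ∀ {E : ℝ → ι → ℝ}, ContinuousOn E (Icc 0 T) →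
      IntervalIntegrable (fun t => ∑ i, w i * E t i) MeasureTheory.volume 0 T := fun hE =>
    ContinuousOn.intervalIntegrable (by rw [uIcc_of_le hT]; fun_prop)
  exact intervalIntegral.integral_mono_on hT (hint hC) (hint hD) fun t ht =>
    Finset.sum_le_sum fun i _ => mul_le_mul_of_nonneg_left (hCD t ht i) (hw i)

theorem risk_monotone_in_graph_general {N : ℕ} (a1 a2 : Fin N → Fin N → ℝ)
    (ha1 : ∀ i j, a1 i j = 0 ∨ a1 i j = 1) (ha2 : ∀ i j, a2 i j = 0 ∨ a2 i j = 1)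
    (h12 : ∀ i j, a1 i j ≤ a2 i j)
    (w : Fin N → ℝ) (α β δ γ T B : ℝ)
    (hα : 0 < α) (hβ : 0 < β) (hδ : 0 < δ) (hγ : 0 < γ)
    (hw : ∀ i, 0 < w i) (hT : 0 < T)
    (C0 : Fin N → ℝ) (h0box : ∀ i, C0 i ∈ Set.Icc (0 : ℝ) 1)
    (sol1 sol2 : (Fin N → ℝ) → ℝ → Fin N → ℝ)
    (hsol1 : ∀ x : Fin N → ℝ, (∀ i, 0 ≤ x i) → sol1 x 0 = C0 ∧
      ∀ t ∈ Set.Icc (0 : ℝ) T, HasDerivAt (sol1 x) (scsF a1 w x α β δ γ (sol1 x t)) t)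
    (hsol2 : ∀ x : Fin N → ℝ, (∀ i, 0 ≤ x i) → sol2 x 0 = C0 ∧
      ∀ t ∈ Set.Icc (0 : ℝ) T, HasDerivAt (sol2 x) (scsF a2 w x α β δ γ (sol2 x t)) t) :
    sSup ((fun x => ∫ t in (0:ℝ)..T, ∑ i, w i * sol1 x t i) ''
        {u : Fin N → ℝ | (∀ i, 0 ≤ u i) ∧ ∑ i, u i = B}) ≤
    sSup ((fun x => ∫ t in (0:ℝ)..T, ∑ i, w i * sol2 x t i) ''
        {u : Fin N → ℝ | (∀ i, 0 ≤ u i) ∧ ∑ i, u i = B}) := by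
  have hunit : ∀ {a : Fin N → Fin N → ℝ}, (∀ i j, a i j = 0 ∨ a i j = 1) →
      ∀ i j, a i j ∈ Icc (0 : ℝ) 1 := fun ha i j => by rcases ha i j with h | h <;> simp [h]
  have hbox : ∀ {a : Fin N → Fin N → ℝ} {x : Fin N → ℝ} {C : ℝ → Fin N → ℝ},
      (∀ i j, a i j = 0 ∨ a i j = 1) → (∀ i, 0 ≤ x i) → C 0 = C0 →
      (∀ t ∈ Icc 0 T, HasDerivAt C (scsF a w x α β δ γ (C t)) t) →
      ∀ t ∈ Icc 0 T, ∀ i, C t i ∈ Icc 0 1 := fun ha hx h0 hd =>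
    scs_sol_mem_Icc hα.le hβ.le hδ hγ.le hw hx (hunit ha) (h0 ▸ h0box) hd
  rw [sSup_image', sSup_image']
  refine ciSup_mono ⟨T * ∑ i, w i, ?_⟩ fun ⟨x, hx, _⟩ => ?_
  · rintro _ ⟨⟨x, hx, _⟩, rfl⟩
    obtain ⟨h0, hd⟩ := hsol2 x hx
    simpa using intervalIntegral_sum_mul_mono (D := fun _ _ => 1) hT.le (fun i => (hw i).le)
      (HasDerivAt.continuousOn hd) continuousOn_const fun t ht i => (hbox ha2 hx h0 hd t ht i).2
  · obtain ⟨h10, hd1⟩ := hsol1 x hx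
    obtain ⟨h20, hd2⟩ := hsol2 x hx
    exact intervalIntegral_sum_mul_mono hT.le (fun i => (hw i).le) (HasDerivAt.continuousOn hd1)
      (HasDerivAt.continuousOn hd2) <| scs_sol_le_of_adj_le hα.le hβ.le hδ hγ.le hw hx
        (fun i j => (hunit ha1 i j).1) h12 (fun i j => (hunit ha2 i j).2) (by simp [h10, h20])
        (hbox ha1 hx h10 hd1) hd1 hd2

/-- The risk of an organization increases with the addition of new edges:
if `G₁` is a spanning subgraph of `G₂` (adjacency matrices satisfy `a1 ≤ a2`
entrywise), then `R(G₁) ≤ R(G₂)`, where `R(G) = sup_{x ∈ Ω_B} ∫₀ᵀ Σ_i w_i C_i(t) dt`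
over the admissible strategy set `Ω_B`. -/
theorem risk_monotone_in_graph {N : ℕ} (a1 a2 : Fin N → Fin N → ℝ)
    (ha1 : ∀ i j, a1 i j = 0 ∨ a1 i j = 1) (ha2 : ∀ i j, a2 i j = 0 ∨ a2 i j = 1)
    (hsym1 : ∀ i j, a1 i j = a1 j i) (hsym2 : ∀ i j, a2 i j = a2 j i)
    (h12 : ∀ i j, a1 i j ≤ a2 i j)
    (w : Fin N → ℝ) (α β δ γ T B : ℝ)
    (hα : 0 < α) (hβ : 0 < β) (hδ : 0 < δ) (hγ : 0 < γ)
    (hw : ∀ i, 0 < w i) (hT : 0 < T) (hB : 0 < B)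
    (C0 : Fin N → ℝ) (h0box : ∀ i, C0 i ∈ Set.Icc (0 : ℝ) 1)
    (sol1 sol2 : (Fin N → ℝ) → ℝ → Fin N → ℝ)
    (hsol1 : ∀ x : Fin N → ℝ, (∀ i, 0 ≤ x i) → sol1 x 0 = C0 ∧
      ∀ t ∈ Set.Icc (0 : ℝ) T, HasDerivAt (sol1 x) (scsF a1 w x α β δ γ (sol1 x t)) t)
    (hsol2 : ∀ x : Fin N → ℝ, (∀ i, 0 ≤ x i) → sol2 x 0 = C0 ∧
      ∀ t ∈ Set.Icc (0 : ℝ) T, HasDerivAt (sol2 x) (scsF a2 w x α β δ γ (sol2 x t)) t) :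
    sSup ((fun x => ∫ t in (0:ℝ)..T, ∑ i, w i * sol1 x t i) ''
        {u : Fin N → ℝ | (∀ i, 0 ≤ u i) ∧ ∑ i, u i = B}) ≤
    sSup ((fun x => ∫ t in (0:ℝ)..T, ∑ i, w i * sol2 x t i) ''
        {u : Fin N → ℝ | (∀ i, 0 ≤ u i) ∧ ∑ i, u i = B}) :=
  risk_monotone_in_graph_general a1 a2 ha1 ha2 h12 w α β δ γ T B hα hβ hδ hγ hw hT C0 h0box sol1
    sol2 hsol1 hsol2
end

section
/- Scaling up the attack strategy increases compromise probabilities: if λ ≥ 1 and C^{(1)}, C^{(λ)} are the solutions of the SCS model with attack strategies x and λx respectively (same parameters, same initial condition in [0,1]^N), then C_i^{(1)}(t) ≤ C_i^{(λ)}(t) for all i and t ∈ [0,T]. -/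
open Set Filter Topology

theorem forall_lt_zero_of_deriv_neg_at_first_touch {ι : Type*} [Finite ι]
    {u u' : ℝ → ι → ℝ} {a b : ℝ}
    (hu : ∀ t ∈ Icc a b, ∀ i, HasDerivAt (fun s => u s i) (u' t i) t)
    (ha : ∀ i, u a i < 0)
    (htouch : ∀ t ∈ Ioc a b, ∀ i, u t i = 0 → (∀ j, u t j ≤ 0) → u' t i < 0) :
    ∀ t ∈ Icc a b, ∀ i, u t i < 0 := by
  by_contra! hbad
  obtain ⟨t₁, ht₁, i₁, hi₁⟩ := hbad
  set S := ⋃ i, Icc a b ∩ (fun s => u s i) ⁻¹' Ici 0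
  have hcont : ∀ i, ContinuousOn (fun s => u s i) (Icc a b) :=
    fun i s hs => (hu s hs i).continuousAt.continuousWithinAt
  have hS : IsCompact S := isCompact_iUnion fun i => isCompact_Icc.of_isClosed_subset
    ((hcont i).preimage_isClosed_of_isClosed isClosed_Icc isClosed_Ici) inter_subset_left
  obtain ⟨t₀, ht₀S, ht₀least⟩ := hS.exists_isLeast ⟨t₁, mem_iUnion.2 ⟨i₁, ht₁, hi₁⟩⟩
  obtain ⟨i₀, ht₀, hi₀⟩ := mem_iUnion.1 ht₀S
  have hbefore : ∀ s ∈ Ico a t₀, ∀ j, u s j < 0 := fun s hs j => by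
    by_contra! h
    exact (ht₀least (mem_iUnion.2 ⟨j, ⟨hs.1, hs.2.le.trans ht₀.2⟩, h⟩)).not_gt hs.2
  have hat₀ : a < t₀ := ht₀.1.lt_of_ne fun h => (ha i₀).not_ge (h ▸ hi₀)
  have hleft : ∀ᶠ s in 𝓝[<] t₀, s ∈ Ico a t₀ :=
    mem_of_superset (Ioo_mem_nhdsLT hat₀) Ioo_subset_Ico_self
  have hle : ∀ j, u t₀ j ≤ 0 := fun j =>
    le_of_tendsto ((hu t₀ ht₀ j).continuousAt.tendsto.mono_left nhdsWithin_le_nhds)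
      (hleft.mono fun s hs => (hbefore s hs j).le)
  have hzero : u t₀ i₀ = 0 := (hle i₀).antisymm hi₀
  have hderiv := htouch t₀ ⟨hat₀, ht₀.2⟩ i₀ hzero hle
  rw [← (hu t₀ ht₀ i₀).deriv] at hderiv
  obtain ⟨s, hsign, hs⟩ := ((eventually_nhdsWithin_of_eventually_nhds
    (eventually_nhdsWithin_sign_eq_of_deriv_neg hderiv hzero)).and hleft).exists
  have : SignType.sign (u s i₀) = -1 := sign_neg (hbefore s hs i₀)
  rw [hsign, sign_pos (sub_pos.2 hs.2)] at this
  exact absurd this (by decide)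

theorem forall_nonpos_of_deriv_lt_mul_at_touch {ι : Type*} [Finite ι]
    {u u' : ℝ → ι → ℝ} {a b K : ℝ}
    (hu : ∀ t ∈ Icc a b, ∀ i, HasDerivAt (fun s => u s i) (u' t i) t)
    (ha : ∀ i, u a i ≤ 0)
    (htouch : ∀ t ∈ Ioc a b, ∀ i, ∀ η > 0, u t i = η → (∀ j, u t j ≤ η) → u' t i < K * η) :
    ∀ t ∈ Icc a b, ∀ i, u t i ≤ 0 := by
  intro t ht i
  refine le_of_forall_pos_lt_add fun ε hε => ?_
  set barrier : ℝ → ℝ := fun s => ε * Real.exp (K * (s - t))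
  have hbarrier : ∀ s, HasDerivAt barrier (K * barrier s) s := fun s => by
    refine ((((hasDerivAt_id s).sub_const t).const_mul K).exp.const_mul ε).congr_deriv ?_
    simp only [barrier, id]; ring
  have hpos : ∀ s, 0 < barrier s := fun s => by positivity
  have hlt := forall_lt_zero_of_deriv_neg_at_first_touch (u := fun s j => u s j - barrier s)
    (fun s hs j => (hu s hs j).sub (hbarrier s)) (fun j => by linarith [ha j, hpos a])
    (fun s hs j hzero hle => by
      have := htouch s hs j (barrier s) (hpos s) (by linarith) fun k => by linarith [hle k]
      linarith)
    t ht i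
  have : barrier t = ε := by simp [barrier]
  linarith

theorem exists_forall_neg_le_of_continuousOn {X ι : Type*} [TopologicalSpace X] [Fintype ι]
    {s : Set X} {f : X → ι → ℝ} (hs : IsCompact s) (hf : ContinuousOn f s) :
    ∃ M, 0 ≤ M ∧ ∀ x ∈ s, ∀ j, -M ≤ f x j := by
  obtain ⟨M, hM⟩ := hs.exists_bound_of_continuousOn hf
  refine ⟨max M 0, le_max_right _ _, fun x hx j => ?_⟩
  have hj : |f x j| ≤ M := (norm_le_pi_norm (f x) j).trans (hM x hx)
  linarith [neg_abs_le (f x j), le_max_left M 0]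

section SCS

variable {N : ℕ} {a : Fin N → Fin N → ℝ} {w x : Fin N → ℝ} {α β δ γ : ℝ}

theorem le_one_of_hasDerivAt_scsF {T : ℝ} (hγ : 0 < γ) (hw : ∀ i, 0 < w i)
    {C : ℝ → Fin N → ℝ} (hC : ∀ t ∈ Icc 0 T, HasDerivAt C (scsF a w x α β δ γ (C t)) t)
    (h0 : ∀ i, C 0 i ≤ 1) : ∀ t ∈ Icc 0 T, ∀ i, C t i ≤ 1 := by
  intro t ht i
  have hCi : ∀ s ∈ Icc 0 T, HasDerivAt (fun u => C u i) (scsF a w x α β δ γ (C s) i) s :=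
    fun s hs => hasDerivAt_pi.1 (hC s hs) i
  refine image_le_of_deriv_right_lt_deriv_boundary' (B := fun _ => 1) (B' := fun _ => 0)
    (fun s hs => (hCi s hs).continuousAt.continuousWithinAt)
    (fun s hs => (hCi s (Ico_subset_Icc_self hs)).hasDerivWithinAt) (h0 i) continuousOn_const
    (fun s _ => hasDerivWithinAt_const _ _ _) (fun s _ hs => ?_) ht
  have : 0 < γ * w i := mul_pos hγ (hw i)
  simpa [scsF, hs] using this

theorem scsF_le_scsF_const_mul_of_le_one {C : Fin N → ℝ} {i : Fin N} {lam : ℝ} (hα : 0 ≤ α)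
    (hδ : 0 ≤ δ) (hw : 0 ≤ w i) (hx : 0 ≤ x i) (hlam : 1 ≤ lam) (hC : C i ≤ 1) :
    scsF a w x α β δ γ C i ≤ scsF a w (fun j => lam * x j) α β δ γ C i := by
  have : 0 ≤ 1 / (δ * w i) * ((lam - 1) * (α * x i) * (1 - C i)) := by
    have := sub_nonneg.2 hlam; have := sub_nonneg.2 hC; positivity
  simp only [scsF]
  linarith

theorem scsF_sub_scsF_le {C₁ C₂ : Fin N → ℝ} {i : Fin N} {M η : ℝ}
    (ha : ∀ j, a j i ∈ Icc 0 1) (hα : 0 ≤ α) (hβ : 0 ≤ β) (hδ : 0 ≤ δ) (hγ : 0 ≤ γ)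
    (hw : 0 ≤ w i) (hx : 0 ≤ x i) (hM : 0 ≤ M) (hC₁ : ∀ j, -M ≤ C₁ j) (hC₂ : C₂ i ∈ Icc (-M) 1)
    (hη : 0 ≤ η) (hi : C₁ i = C₂ i + η) (hle : ∀ j, C₁ j - C₂ j ≤ η) :
    scsF a w x α β δ γ C₁ i - scsF a w x α β δ γ C₂ i ≤
      1 / (δ * w i) * (β * N * (2 * M + 1)) * η := by
  set S₁ := ∑ j, a j i * C₁ j
  set S₂ := ∑ j, a j i * C₂ j
  have hS : S₁ - S₂ ≤ N * η := by
    rw [← Finset.sum_sub_distrib]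
    refine (Finset.sum_le_card_nsmul _ _ η fun j _ => ?_).trans (by simp)
    have := mul_le_mul_of_nonneg_left (hle j) (ha j).1
    nlinarith [(ha j).2]
  have hS₁ : -(N * M) ≤ S₁ := by
    refine le_trans (by simp) (Finset.card_nsmul_le_sum _ _ (-M) fun j _ => ?_)
    nlinarith [(ha j).1, (ha j).2, hC₁ j]
  have hinner : (α * x i + β * S₁) * (1 - C₁ i) - (α * x i + β * S₂) * (1 - C₂ i) ≤
      β * N * (2 * M + 1) * η := by
    have h1 : β * (S₁ - S₂) * (1 - C₂ i) ≤ β * (N * η) * (1 + M) :=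
      mul_le_mul (mul_le_mul_of_nonneg_left hS hβ) (by linarith [hC₂.1])
        (by linarith [hC₂.2]) (by positivity)
    have h2 : -(β * S₁ * η) ≤ β * (N * M) * η := by nlinarith [mul_nonneg hβ hη]
    have h3 : 0 ≤ α * x i * η := by positivity
    rw [hi]; nlinarith
  have hdamp : 0 ≤ γ * w i * η := by positivity
  calc scsF a w x α β δ γ C₁ i - scsF a w x α β δ γ C₂ i
      = 1 / (δ * w i) * ((α * x i + β * S₁) * (1 - C₁ i) - (α * x i + β * S₂) * (1 - C₂ i))
        - γ * w i * η := by simp only [scsF, S₁, S₂, hi]; ring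
    _ ≤ 1 / (δ * w i) * (β * N * (2 * M + 1)) * η := by
      have := mul_le_mul_of_nonneg_left hinner (by positivity : 0 ≤ 1 / (δ * w i))
      linarith

end SCS

theorem scs_monotone_in_strategy_scaling_general {N : ℕ} (a : Fin N → Fin N → ℝ)
    (ha : ∀ i j, a i j = 0 ∨ a i j = 1)
    (w x : Fin N → ℝ) (α β δ γ T lam : ℝ)
    (hα : 0 < α) (hβ : 0 < β) (hδ : 0 < δ) (hγ : 0 < γ) (hlam : 1 ≤ lam)
    (hx : ∀ i, 0 ≤ x i) (hw : ∀ i, 0 < w i)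
    (C1 C2 : ℝ → Fin N → ℝ)
    (hC1 : ∀ t ∈ Set.Icc (0 : ℝ) T, HasDerivAt C1 (scsF a w x α β δ γ (C1 t)) t)
    (hC2 : ∀ t ∈ Set.Icc (0 : ℝ) T,
      HasDerivAt C2 (scsF a w (fun i => lam * x i) α β δ γ (C2 t)) t)
    (h0 : C1 0 = C2 0) (h0box : ∀ i, C1 0 i ∈ Set.Icc (0 : ℝ) 1) :
    ∀ t ∈ Set.Icc (0 : ℝ) T, ∀ i, C1 t i ≤ C2 t i := by
  obtain ⟨M₁, hM₁, hC1M⟩ := exists_forall_neg_le_of_continuousOn isCompact_Icc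
    fun t ht => (hC1 t ht).continuousAt.continuousWithinAt
  obtain ⟨M₂, -, hC2M⟩ := exists_forall_neg_le_of_continuousOn isCompact_Icc
    fun t ht => (hC2 t ht).continuousAt.continuousWithinAt
  have hC2le := le_one_of_hasDerivAt_scsF hγ hw hC2 fun i => h0 ▸ (h0box i).2
  have ha' : ∀ i j, a j i ∈ Icc 0 1 := fun i j => by rcases ha j i with h | h <;> simp [h]
  set M := max M₁ M₂
  have hM : 0 ≤ M := le_max_of_le_left hM₁
  set R := ∑ j, 1 / (δ * w j)
  have hR : ∀ i, 1 / (δ * w i) ≤ R := fun i =>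
    Finset.single_le_sum (f := fun j => 1 / (δ * w j))
      (fun j _ => by have := hw j; positivity) (Finset.mem_univ i)
  intro t ht i
  suffices C1 t i - C2 t i ≤ 0 by linarith
  refine forall_nonpos_of_deriv_lt_mul_at_touch (u := fun s j => C1 s j - C2 s j)
    (K := 1 + R * (β * N * (2 * M + 1)))
    (fun s hs j => (hasDerivAt_pi.1 (hC1 s hs) j).sub (hasDerivAt_pi.1 (hC2 s hs) j))
    (fun j => by simp [h0]) (fun s hs j η hη hj hle => ?_) t ht i
  have hs' := Ioc_subset_Icc_self hs
  have hscale := scsF_le_scsF_const_mul_of_le_one (a := a) (β := β) (γ := γ) hα.le hδ.le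
    (hw j).le (hx j) hlam (hC2le s hs' j)
  have hlip := scsF_sub_scsF_le (ha' j) hα.le hβ.le hδ.le hγ.le (hw j).le (hx j)
    hM (fun k => (neg_le_neg (le_max_left _ _)).trans (hC1M s hs' k))
    ⟨(neg_le_neg (le_max_right _ _)).trans (hC2M s hs' j), hC2le s hs' j⟩ hη.le
    (by linarith) hle
  have hB : 0 ≤ β * N * (2 * M + 1) := by positivity
  have := mul_le_mul_of_nonneg_right (mul_le_mul_of_nonneg_right (hR j) hB) hη.le
  linarith

/-- Scaling up the attack strategy increases compromise probabilities: for λ ≥ 1,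
the solution with strategy x stays componentwise below the solution with
strategy λ·x on [0,T] (same parameters, same initial condition in [0,1]^N). -/
theorem scs_monotone_in_strategy_scaling {N : ℕ} (a : Fin N → Fin N → ℝ)
    (ha : ∀ i j, a i j = 0 ∨ a i j = 1)
    (w x : Fin N → ℝ) (α β δ γ T lam : ℝ)
    (hα : 0 < α) (hβ : 0 < β) (hδ : 0 < δ) (hγ : 0 < γ) (hlam : 1 ≤ lam)
    (hx : ∀ i, 0 ≤ x i) (hw : ∀ i, 0 < w i) (hT : 0 < T)
    (C1 C2 : ℝ → Fin N → ℝ)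
    (hC1 : ∀ t ∈ Set.Icc (0 : ℝ) T, HasDerivAt C1 (scsF a w x α β δ γ (C1 t)) t)
    (hC2 : ∀ t ∈ Set.Icc (0 : ℝ) T,
      HasDerivAt C2 (scsF a w (fun i => lam * x i) α β δ γ (C2 t)) t)
    (h0 : C1 0 = C2 0) (h0box : ∀ i, C1 0 i ∈ Set.Icc (0 : ℝ) 1) :
    ∀ t ∈ Set.Icc (0 : ℝ) T, ∀ i, C1 t i ≤ C2 t i :=
  scs_monotone_in_strategy_scaling_general a ha w x α β δ γ T lam hα hβ hδ hγ hlam hx hw C1 C2 hC1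
    hC2 h0 h0box
end
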